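/- arXiv:1103.6259 — 4 statements merged into one kernel-verified Lean document; each statement's English description precedes it below -/
import Mathlib

section
/- Let p be a prime and 𝔉 an ℕ_p-saturated formation of finite groups containing every finite p-group. Let N be an elementary abelian normal p-subgroup of a finite group G, and let G/N act on N by the action induced by conjugation (well defined since N is abelian). If the semidirect product N ⋊ (G/N) belongs to 𝔉, then G ∈ 𝔉. -/
set_option maxHeartbeats 1000000
set_option linter.unusedVariables false

/-- A bundled finite group. -/
structure FinGrp : Type 1 where
  carrier : Type
  [grp : Group carrier]
  [fin : Finite carrier]

attribute [instance] FinGrp.grp FinGrp.fin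

/-- A class of finite groups. -/
abbrev GroupClass : Type 1 := ∀ (G : Type) [Group G] [Finite G], Prop

/-- The empty class of groups. -/
def EmptyClass : GroupClass := fun _ _ _ => False

/-- A formation: a class of finite groups closed under isomorphism, homomorphic images and
subdirect products. -/
structure IsFormation (F : GroupClass) : Prop where
  iso_closed : ∀ (G : Type) [Group G] [Finite G] (H : Type) [Group H] [Finite H],
    Nonempty (G ≃* H) → F G → F H
  quotient_closed : ∀ (G : Type) [Group G] [Finite G] (N : Subgroup G) [N.Normal],
    F G → F (G ⧸ N)
  subdirect_closed : ∀ (G : Type) [Group G] [Finite G] (N₁ N₂ : Subgroup G)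
    [N₁.Normal] [N₂.Normal], N₁ ⊓ N₂ = ⊥ → F (G ⧸ N₁) → F (G ⧸ N₂) → F G

/-- `H/K` is a chief factor of `G` : both are normal in `G`, `K < H`, and no normal subgroup
of `G` lies strictly between them. -/
structure IsChiefFactor (G : Type) [Group G] (H K : Subgroup G) : Prop where
  normalH : H.Normal
  normalK : K.Normal
  lt : K < H
  no_middle : ∀ N : Subgroup G, N.Normal → K ≤ N → N ≤ H → N = K ∨ N = H

/-- The centralizer `C_G(H/K) = {g ∈ G | ∀ h ∈ H, g h g⁻¹ h⁻¹ ∈ K}` of a factor `H/K`. -/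
def relCentralizer {G : Type} [Group G] (H K : Subgroup G) (hK : K.Normal) : Subgroup G where
  carrier := {g : G | ∀ h ∈ H, g * h * g⁻¹ * h⁻¹ ∈ K}
  one_mem' := by intro h hh; simpa using K.one_mem
  mul_mem' := by
    intro a b ha hb h hh
    have key : a * b * h * (a * b)⁻¹ * h⁻¹ =
        (a * (b * h * b⁻¹ * h⁻¹) * a⁻¹) * (a * h * a⁻¹ * h⁻¹) := by group
    rw [key]
    exact K.mul_mem (hK.conj_mem _ (hb h hh) a) (ha h hh)
  inv_mem' := by
    intro a ha h hh
    have h1 : (a * h * a⁻¹ * h⁻¹)⁻¹ ∈ K := K.inv_mem (ha h hh)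
    have key : a⁻¹ * h * a⁻¹⁻¹ * h⁻¹ = a⁻¹ * (a * h * a⁻¹ * h⁻¹)⁻¹ * a⁻¹⁻¹ := by group
    exact key ▸ hK.conj_mem _ h1 a⁻¹

theorem mem_relCentralizer_iff {G : Type} [Group G] {H K : Subgroup G} (hK : K.Normal)
    (g : G) : g ∈ relCentralizer H K hK ↔ ∀ h ∈ H, g * h * g⁻¹ * h⁻¹ ∈ K := Iff.rfl

theorem relCentralizer_normal {G : Type} [Group G] {H K : Subgroup G}
    (hH : H.Normal) (hK : K.Normal) : (relCentralizer H K hK).Normal := by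
  constructor
  intro c hc g h hh
  have hh' : g⁻¹ * h * g ∈ H := by simpa using hH.conj_mem h hh g⁻¹
  have hk := hc _ hh'
  have key : g * c * g⁻¹ * h * (g * c * g⁻¹)⁻¹ * h⁻¹ =
      g * (c * (g⁻¹ * h * g) * c⁻¹ * (g⁻¹ * h * g)⁻¹) * g⁻¹ := by group
  exact key ▸ hK.conj_mem _ hk g

theorem normal_sInf {G : Type} [Group G] {S : Set (Subgroup G)}
    (h : ∀ N ∈ S, N.Normal) : (sInf S).Normal := by
  constructor
  intro n hn g
  rw [Subgroup.mem_sInf] at hn ⊢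
  intro N hN
  exact (h N hN).conj_mem n (hn N hN) g

theorem normal_sSup {G : Type} [Group G] {S : Set (Subgroup G)}
    (h : ∀ N ∈ S, N.Normal) : (sSup S).Normal := by
  constructor
  intro n hn g
  rw [sSup_eq_iSup'] at hn ⊢
  refine Subgroup.iSup_induction (fun N : S => (N : Subgroup G))
    (C := fun x => g * x * g⁻¹ ∈ ⨆ N : S, (N : Subgroup G)) hn
    (fun N x hx => ?_) ?_ (fun x y hx hy => ?_)
  · exact le_iSup (fun N : S => (N : Subgroup G)) N ((h N N.2).conj_mem x hx g)
  · simpa using Subgroup.one_mem _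
  · show g * (x * y) * g⁻¹ ∈ _
    have key : g * (x * y) * g⁻¹ = g * x * g⁻¹ * (g * y * g⁻¹) := by group
    rw [key]
    exact Subgroup.mul_mem _ hx hy
/-- `O_p(G)`: the largest normal `p`-subgroup of `G` (the join of all normal `p`-subgroups). -/
def pRadical (p : ℕ) (G : Type) [Group G] : Subgroup G :=
  sSup {N : Subgroup G | N.Normal ∧ IsPGroup p N}

instance pRadical_normal (p : ℕ) (G : Type) [Group G] : (pRadical p G).Normal :=
  normal_sSup fun _ hN => hN.1

/-- `O_{p'}(G)`: the largest normal subgroup of `G` of order coprime to `p`. -/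
def pPrimeRadical (p : ℕ) (G : Type) [Group G] : Subgroup G :=
  sSup {N : Subgroup G | N.Normal ∧ Nat.Coprime (Nat.card N) p}

instance pPrimeRadical_normal (p : ℕ) (G : Type) [Group G] : (pPrimeRadical p G).Normal :=
  normal_sSup fun _ hN => hN.1

/-- `O_{p',p}(G)`: the preimage in `G` of `O_p(G / O_{p'}(G))`. -/
def pPrimePRadical (p : ℕ) (G : Type) [Group G] : Subgroup G :=
  (pRadical p (G ⧸ pPrimeRadical p G)).comap (QuotientGroup.mk' (pPrimeRadical p G))

instance pPrimePRadical_normal (p : ℕ) (G : Type) [Group G] : (pPrimePRadical p G).Normal :=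
  (pRadical_normal p _).comap _

/-- A composition series of `G` : a chain `⊥ = c 0 ≤ ⋯ ≤ c n = ⊤` of subgroups, each normal
in the next one with simple quotient. -/
def IsCompSeries {G : Type} [Group G] (n : ℕ) (c : Fin (n + 1) → Subgroup G) : Prop :=
  c 0 = ⊥ ∧ c (Fin.last n) = ⊤ ∧
  ∀ i : Fin n, c i.castSucc ≤ c i.succ ∧
    ∃ hn : ((c i.castSucc).subgroupOf (c i.succ)).Normal,
      letI := hn
      IsSimpleGroup ((c i.succ) ⧸ (c i.castSucc).subgroupOf (c i.succ))

/-- `S` is (isomorphic to) a composition factor of the finite group `G`. -/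
def IsCompFactor (S : Type) [Group S] (G : Type) [Group G] : Prop :=
  ∃ (n : ℕ) (c : Fin (n + 1) → Subgroup G), IsCompSeries n c ∧
    ∃ i : Fin n, ∃ hn : ((c i.castSucc).subgroupOf (c i.succ)).Normal,
      letI := hn
      Nonempty (((c i.succ) ⧸ (c i.castSucc).subgroupOf (c i.succ)) ≃* S)

/-- The small centralizer `c_G(H/K)` of a factor `H/K` : the subgroup generated by all normal
subgroups `N` of `G` such that no composition factor of `NK/K` is isomorphic to a composition
factor of `H/K`. -/
def smallCentralizer {G : Type} [Group G] (H K : Subgroup G) (hK : K.Normal) : Subgroup G :=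
  haveI := hK
  sSup {N : Subgroup G | N.Normal ∧ ∀ (S : Type) (_ : Group S),
    IsCompFactor S (↥(N ⊔ K) ⧸ K.subgroupOf (N ⊔ K)) → ¬ IsCompFactor S (H ⧸ K.subgroupOf H)}

theorem smallCentralizer_normal {G : Type} [Group G] {H K : Subgroup G} (hK : K.Normal) :
    (smallCentralizer H K hK).Normal :=
  normal_sSup fun _ hN => hN.1

/-- `C^S(G)`: the intersection of the centralizers of all chief factors of `G` all of whose
composition factors are isomorphic to `S`. -/
def CSRad (S : Type) [Group S] (G : Type) [Group G] : Subgroup G :=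
  sInf {C : Subgroup G | ∃ (H K : Subgroup G) (hcf : IsChiefFactor G H K),
    (haveI := hcf.normalK;
      ∀ (T : Type) (_ : Group T), IsCompFactor T (H ⧸ K.subgroupOf H) → Nonempty (T ≃* S)) ∧
    C = relCentralizer H K hcf.normalK}

instance CSRad_normal (S : Type) [Group S] (G : Type) [Group G] : (CSRad S G).Normal :=
  normal_sInf fun C hC => by
    obtain ⟨H, K, hcf, -, rfl⟩ := hC
    exact relCentralizer_normal hcf.normalH hcf.normalK

/-- `C^p(G)`: the intersection of the centralizers of all chief factors of `G` whose order is
a power of the prime `p`. -/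
def CpRad (p : ℕ) (G : Type) [Group G] : Subgroup G :=
  sInf {C : Subgroup G | ∃ (H K : Subgroup G) (hcf : IsChiefFactor G H K),
    (∃ n : ℕ, Nat.card (H ⧸ K.subgroupOf H) = p ^ n) ∧ C = relCentralizer H K hcf.normalK}

instance CpRad_normal (p : ℕ) (G : Type) [Group G] : (CpRad p G).Normal :=
  normal_sInf fun C hC => by
    obtain ⟨H, K, hcf, -, rfl⟩ := hC
    exact relCentralizer_normal hcf.normalH hcf.normalK

/-- The centralizer of a normal subgroup is normal. -/
instance centralizer_normal_of_normal {G : Type} [Group G] (N : Subgroup G) [hN : N.Normal] :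
    (Subgroup.centralizer (N : Set G)).Normal := by
  constructor
  intro c hc g
  rw [Subgroup.mem_centralizer_iff] at hc ⊢
  intro h hh
  have hh' : g⁻¹ * h * g ∈ N := by simpa using hN.conj_mem h hh g⁻¹
  have hcomm := hc _ hh'
  have e1 : h * (g * c * g⁻¹) = g * (g⁻¹ * h * g * c) * g⁻¹ := by group
  rw [e1, hcomm]
  group

/-- The intersection of two normal subgroups is normal. -/
instance inf_normal {G : Type} [Group G] (A B : Subgroup G) [hA : A.Normal] [hB : B.Normal] :
    (A ⊓ B).Normal :=
  ⟨fun n hn g => ⟨hA.conj_mem n hn.1 g, hB.conj_mem n hn.2 g⟩⟩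

instance finite_semidirectProduct {N G : Type} [Group N] [Group G] (φ : G →* MulAut N)
    [Finite N] [Finite G] : Finite (N ⋊[φ] G) :=
  Finite.of_injective (fun x => (x.left, x.right)) (by
    intro a b hab
    simp only [Prod.mk.injEq] at hab
    exact SemidirectProduct.ext hab.1 hab.2)
/-! ### Satellites -/

/-- A local satellite: a map assigning to each prime a class of finite groups which is either
empty or a formation. -/
def IsLocalSatellite (f : ℕ → GroupClass) : Prop :=
  ∀ p : ℕ, p.Prime → (f p = EmptyClass ∨ IsFormation (f p))

/-- A chief factor `H/K` of `G` is `f`-central for a local satellite `f` if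
`G / C_G(H/K) ∈ f q` for every prime `q` dividing `|H/K|`. -/
def LocFCentral (f : ℕ → GroupClass) {G : Type} [Group G] [Finite G]
    (H K : Subgroup G) (hcf : IsChiefFactor G H K) : Prop :=
  ∀ q : ℕ, q.Prime → q ∣ Nat.card (H ⧸ K.subgroupOf H) →
    haveI := relCentralizer_normal hcf.normalH hcf.normalK
    f q (G ⧸ relCentralizer H K hcf.normalK)

/-- `LF f`: the class of all finite groups all of whose chief factors are `f`-central. -/
def LF (f : ℕ → GroupClass) (G : Type) [Group G] [Finite G] : Prop :=
  ∀ (H K : Subgroup G) (hcf : IsChiefFactor G H K), LocFCentral f H K hcf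

/-- An `ω`-local satellite: values `f p` for `p ∈ ω` and a value `f'` (= `f(ω')`),
all empty or formations. -/
def IsOmegaLocalSatellite (ω : Set ℕ) (f : ℕ → GroupClass) (f' : GroupClass) : Prop :=
  (∀ p ∈ ω, f p = EmptyClass ∨ IsFormation (f p)) ∧ (f' = EmptyClass ∨ IsFormation f')

/-- A chief factor `H/K` is `f`-central for the `ω`-local satellite `(f, f')`. -/
def OmegaFCentral (ω : Set ℕ) (f : ℕ → GroupClass) (f' : GroupClass) {G : Type} [Group G]
    [Finite G] (H K : Subgroup G) (hcf : IsChiefFactor G H K) : Prop :=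
  ((∃ p ∈ ω, p ∣ Nat.card (H ⧸ K.subgroupOf H)) ∧
    ∀ p ∈ ω, p ∣ Nat.card (H ⧸ K.subgroupOf H) →
      haveI := relCentralizer_normal hcf.normalH hcf.normalK
      f p (G ⧸ relCentralizer H K hcf.normalK)) ∨
  ((∀ p ∈ ω, ¬ p ∣ Nat.card (H ⧸ K.subgroupOf H)) ∧
    haveI := smallCentralizer_normal (H := H) hcf.normalK;
    f' (G ⧸ smallCentralizer H K hcf.normalK))

/-- `LF_ω(f)`: the class of all finite groups all of whose chief factors are `f`-central. -/
def LFomega (ω : Set ℕ) (f : ℕ → GroupClass) (f' : GroupClass) (G : Type) [Group G]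
    [Finite G] : Prop :=
  ∀ (H K : Subgroup G) (hcf : IsChiefFactor G H K), OmegaFCentral ω f f' H K hcf

/-- A function assigning a class of finite groups to every finite group
(used on simple groups). -/
abbrev CompSatFun : Type 1 := ∀ (S : Type) [Group S] [Finite S], GroupClass

/-- A composition satellite: assigns to each finite simple group (invariantly under isomorphism)
a class which is either empty or a formation. -/
def IsCompSatellite (f : CompSatFun) : Prop :=
  (∀ (S : Type) [Group S] [Finite S] (T : Type) [Group T] [Finite T],
      IsSimpleGroup S → IsSimpleGroup T → Nonempty (S ≃* T) → f S = f T) ∧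
  (∀ (S : Type) [Group S] [Finite S], IsSimpleGroup S → (f S = EmptyClass ∨ IsFormation (f S)))

/-- A chief factor `H/K` of `G` is `f`-central for a composition satellite `f` if
`G / C_G(H/K) ∈ f S` where `S` is the composition type of `H/K`. -/
def CompFCentral (f : CompSatFun) {G : Type} [Group G] [Finite G]
    (H K : Subgroup G) (hcf : IsChiefFactor G H K) : Prop :=
  ∀ (S : Type) (_ : Group S) (_ : Finite S),
    (haveI := hcf.normalK; IsCompFactor S (H ⧸ K.subgroupOf H)) →
    haveI := relCentralizer_normal hcf.normalH hcf.normalK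
    f S (G ⧸ relCentralizer H K hcf.normalK)

/-- `CF f`: the class of all finite groups all of whose chief factors are `f`-central. -/
def CF (f : CompSatFun) (G : Type) [Group G] [Finite G] : Prop :=
  ∀ (H K : Subgroup G) (hcf : IsChiefFactor G H K), CompFCentral f H K hcf

/-- An (isomorphism-closed) class of finite simple groups. -/
def IsSimpleClass (L : GroupClass) : Prop :=
  (∀ (S : Type) [Group S] [Finite S], L S → IsSimpleGroup S) ∧
  (∀ (S : Type) [Group S] [Finite S] (T : Type) [Group T] [Finite T],
    Nonempty (S ≃* T) → L S → L T)

/-- An `𝔏`-composition satellite: values `f S` for simple `S ∈ 𝔏` (invariant under isomorphism)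
and a single value `f'` (= `f(𝔏')`), all empty or formations. -/
def IsLCompSatellite (L : GroupClass) (f : CompSatFun) (f' : GroupClass) : Prop :=
  (∀ (S : Type) [Group S] [Finite S] (T : Type) [Group T] [Finite T],
      L S → L T → Nonempty (S ≃* T) → f S = f T) ∧
  (∀ (S : Type) [Group S] [Finite S], L S → (f S = EmptyClass ∨ IsFormation (f S))) ∧
  (f' = EmptyClass ∨ IsFormation f')

/-- A chief factor `H/K` is `f`-central for the `𝔏`-composition satellite `(f, f')` :
either its composition type `S` lies in `𝔏` and `G/C_G(H/K) ∈ f S`, or its composition type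
lies in `𝔏'` and `G/c_G(H/K) ∈ f'`. -/
def LCompFCentral (L : GroupClass) (f : CompSatFun) (f' : GroupClass) {G : Type} [Group G]
    [Finite G] (H K : Subgroup G) (hcf : IsChiefFactor G H K) : Prop :=
  ((∃ (S : Type) (_ : Group S) (_ : Finite S),
      (haveI := hcf.normalK; IsCompFactor S (H ⧸ K.subgroupOf H)) ∧ L S ∧
      (haveI := relCentralizer_normal hcf.normalH hcf.normalK;
        f S (G ⧸ relCentralizer H K hcf.normalK)))) ∨
  ((∃ (S : Type) (_ : Group S) (_ : Finite S),
      (haveI := hcf.normalK; IsCompFactor S (H ⧸ K.subgroupOf H)) ∧ IsSimpleGroup S ∧ ¬ L S) ∧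
    haveI := smallCentralizer_normal (H := H) hcf.normalK;
    f' (G ⧸ smallCentralizer H K hcf.normalK))

/-- `CF_𝔏(f)`: the class of all finite groups all of whose chief factors are `f`-central. -/
def CFL (L : GroupClass) (f : CompSatFun) (f' : GroupClass) (G : Type) [Group G]
    [Finite G] : Prop :=
  ∀ (H K : Subgroup G) (hcf : IsChiefFactor G H K), LCompFCentral L f f' H K hcf

/-! ### Radicals and saturation -/

/-- The largest normal subgroup all of whose composition factors lie in `𝔏`. -/
def ELRadical (L : GroupClass) (G : Type) [Group G] [Finite G] : Subgroup G :=
  sSup {N : Subgroup G | N.Normal ∧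
    ∀ (S : Type) (_ : Group S) (_ : Finite S), IsCompFactor S N → L S}

instance ELRadical_normal (L : GroupClass) (G : Type) [Group G] [Finite G] :
    (ELRadical L G).Normal :=
  normal_sSup fun _ hN => hN.1

/-- `G_{ωd}`: the largest normal subgroup of `G` all of whose `G`-chief factors below it have
order divisible by some prime in `ω`. -/
def omegadRadical (ω : Set ℕ) (G : Type) [Group G] [Finite G] : Subgroup G :=
  sSup {N : Subgroup G | N.Normal ∧ ∀ (H K : Subgroup G), IsChiefFactor G H K → H ≤ N →
    ∃ p ∈ ω, p ∣ Nat.card (H ⧸ K.subgroupOf H)}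

instance omegadRadical_normal (ω : Set ℕ) (G : Type) [Group G] [Finite G] :
    (omegadRadical ω G).Normal :=
  normal_sSup fun _ hN => hN.1

/-- The soluble radical: the largest normal soluble subgroup. -/
def solRadical (G : Type) [Group G] : Subgroup G :=
  sSup {N : Subgroup G | N.Normal ∧ IsSolvable N}

instance solRadical_normal (G : Type) [Group G] : (solRadical G).Normal :=
  normal_sSup fun _ hN => hN.1

/-- A finite group is `ω`-soluble if each of its composition factors either has order divisible
by no prime in `ω`, or is cyclic of order `p` for some `p ∈ ω`. -/
def IsOmegaSoluble (ω : Set ℕ) (X : Type) [Group X] : Prop :=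
  ∀ (S : Type) (_ : Group S) (_ : Finite S), IsCompFactor S X →
    (∀ p ∈ ω, ¬ p ∣ Nat.card S) ∨ (∃ p ∈ ω, Nat.card S = p ∧ IsCyclic S)

/-- The `ω`-soluble radical: the largest normal `ω`-soluble subgroup. -/
def omegaSolRadical (ω : Set ℕ) (G : Type) [Group G] : Subgroup G :=
  sSup {N : Subgroup G | N.Normal ∧ IsOmegaSoluble ω N}

instance omegaSolRadical_normal (ω : Set ℕ) (G : Type) [Group G] :
    (omegaSolRadical ω G).Normal :=
  normal_sSup fun _ hN => hN.1

/-- `𝔉` is `ℕ_p`-saturated : whenever `N` is a normal `p`-subgroup of `G` with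
`G/Φ(N) ∈ 𝔉`, then `G ∈ 𝔉`. -/
def NpSaturated (p : ℕ) (F : GroupClass) : Prop :=
  ∀ (G : Type) [Group G] [Finite G] (N : Subgroup G) [N.Normal], IsPGroup p N →
    ∀ (M : Subgroup G) [M.Normal], M = (frattini N).map N.subtype → F (G ⧸ M) → F G

/-- A minimal normal subgroup. -/
def IsMinimalNormal {G : Type} [Group G] (N : Subgroup G) : Prop :=
  N.Normal ∧ N ≠ ⊥ ∧ ∀ M : Subgroup G, M.Normal → M < N → M = ⊥

/-- The socle: the subgroup generated by all minimal normal subgroups. -/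
def socle (G : Type) [Group G] : Subgroup G :=
  sSup {N : Subgroup G | IsMinimalNormal N}

/-- A finite group is supersoluble if it has a chain of normal subgroups with cyclic
successive quotients. -/
def IsSupersoluble (X : Type) [Group X] : Prop :=
  ∃ (m : ℕ) (c : Fin (m + 1) → Subgroup X), c 0 = ⊥ ∧ c (Fin.last m) = ⊤ ∧
    (∀ i : Fin m, c i.castSucc ≤ c i.succ) ∧ (∀ i : Fin (m + 1), (c i).Normal) ∧
    ∀ i : Fin m, ∃ hn : ((c i.castSucc).subgroupOf (c i.succ)).Normal,
      letI := hn
      IsCyclic ((c i.succ) ⧸ (c i.castSucc).subgroupOf (c i.succ))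

/-- `Q(𝒳)` for `𝒳 = {G/C^p(G) | G ∈ F}`: the class of all (finite) groups isomorphic to a
quotient of some `G/C^p(G)` with `G ∈ F`. -/
def QModCp (p : ℕ) (F : GroupClass) (X : Type) [Group X] [Finite X] : Prop :=
  ∃ Gb : FinGrp, F Gb.carrier ∧
    ∃ (N : Subgroup (Gb.carrier ⧸ CpRad p Gb.carrier)) (_ : N.Normal),
      Nonempty (((Gb.carrier ⧸ CpRad p Gb.carrier) ⧸ N) ≃* X)

/-- The abelian members of a class of (simple) groups. -/
def abelianIn (L : GroupClass) (S : Type) [Group S] [Finite S] : Prop :=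
  L S ∧ ∀ a b : S, a * b = b * a


/-!
Regard `N` as an `𝔽_p[G/N]`-module `V` and let `H` be the group of unitriangular matrices
`[[1, t, z], [0, 1, x], [0, 0, 1]]` with `t ∈ 𝔽_p` and `x, z ∈ V`. Its centre contains the
copy `{(0, 0, z)}` of `V`, which consists of commutators and so lies in `Φ(H)`. In `Z = H ⋊ G`,
with `G` acting on the `V`-coordinates through `G/N`, the quotient by that copy of `V` and by
`N ≤ G` is a subdirect product of `V ⋊ G/N` and `𝔽_p × G/N`, hence lies in `𝔉`. So if `D ⊴ Z`
contains, for each `n ∈ N`, an element `((0, 0, z), n)`, then `(Z/D)/Φ(W) ∈ 𝔉` for the image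
`W` of `H`, and `ℕ_p`-saturation gives `Z/D ∈ 𝔉`. The antidiagonal `{((0, 0, v), v⁻¹)}` and
`N ≤ G` are two such normal subgroups meeting trivially, so `Z ∈ 𝔉`, and `G` is a quotient of `Z`.
-/

open scoped commutatorElement

theorem commutatorElement_mul_mem_center {X : Type*} [Group X] (a b : X) {c d : X}
    (hc : c ∈ Subgroup.center X) (hd : d ∈ Subgroup.center X) :
    ⁅a * c, b * d⁆ = ⁅a, b⁆ := by
  rw [Subgroup.mem_center_iff] at hc hd
  have hcb : c * (b * d) * c⁻¹ = b * d := by rw [← hc, mul_inv_cancel_right]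
  have hda : d * a⁻¹ * d⁻¹ = a⁻¹ := by rw [← hd, mul_inv_cancel_right]
  calc ⁅a * c, b * d⁆ = a * (c * (b * d) * c⁻¹) * a⁻¹ * (d⁻¹ * b⁻¹) := by
        rw [commutatorElement_def]; group
    _ = a * b * (d * a⁻¹ * d⁻¹) * b⁻¹ := by rw [hcb]; group
    _ = ⁅a, b⁆ := by rw [hda, commutatorElement_def]

theorem commutatorElement_mem_frattini_of_mem_center {X : Type*} [Group X] {u v : X}
    (h : ⁅u, v⁆ ∈ Subgroup.center X) : ⁅u, v⁆ ∈ frattini X := by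
  refine Subgroup.mem_iInf.mpr fun M => Subgroup.mem_iInf.mpr fun hM => ?_
  by_contra hz
  have hsup : M ⊔ Subgroup.center X = ⊤ := hM.2 _ (left_lt_sup.mpr fun hle => hz (hle h))
  obtain ⟨m, hm, c, hc, rfl⟩ :=
    Subgroup.mem_sup_of_normal_right.mp (hsup ▸ Subgroup.mem_top u)
  obtain ⟨n, hn, d, hd, rfl⟩ :=
    Subgroup.mem_sup_of_normal_right.mp (hsup ▸ Subgroup.mem_top v)
  rw [commutatorElement_mul_mem_center m n hc hd] at hz
  exact hz (M.mul_mem (M.mul_mem (M.mul_mem hm hn) (M.inv_mem hm)) (M.inv_mem hn))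

theorem map_frattini_le_map_frattini_range {H X : Type*} [Group H] [Group X] (f : H →* X) :
    (frattini H).map f ≤ (frattini f.range).map f.range.subtype := by
  rw [← f.subtype_comp_rangeRestrict, ← Subgroup.map_map]
  exact Subgroup.map_mono (Subgroup.map_le_iff_le_comap.mpr
    (frattini_le_comap_frattini_of_surjective f.rangeRestrict_surjective))

theorem SemidirectProduct.normal_of_conj_mem {N G : Type*} [Group N] [Group G]
    {φ : G →* MulAut N} (H : Subgroup (N ⋊[φ] G))
    (hinl : ∀ n, ∀ h ∈ H, inl n * h * (inl n)⁻¹ ∈ H)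
    (hinr : ∀ g, ∀ h ∈ H, inr g * h * (inr g)⁻¹ ∈ H) : H.Normal where
  conj_mem h hh z := by
    have hz : z * h * z⁻¹ =
        inl z.left * (inr z.right * h * (inr z.right)⁻¹) * (inl z.left)⁻¹ := by
      conv_lhs => rw [← inl_left_mul_inr_right z]
      group
    exact hz ▸ hinl _ _ (hinr _ _ hh)

namespace IsFormation

variable {F : GroupClass}

theorem of_surjective (hF : IsFormation F) {X Y : Type} [Group X] [Finite X] [Group Y] [Finite Y]
    (f : X →* Y) (hf : Function.Surjective f) (hX : F X) : F Y :=
  hF.iso_closed _ _ ⟨QuotientGroup.quotientKerEquivOfSurjective f hf⟩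
    (hF.quotient_closed X f.ker hX)

theorem quotient_ker_mem (hF : IsFormation F) {X Y : Type} [Group X] [Group Y] [Finite Y]
    (f : X →* Y) (hf : Function.Surjective f) (hY : F Y) : F (X ⧸ f.ker) :=
  hF.iso_closed _ _ ⟨(QuotientGroup.quotientKerEquivOfSurjective f hf).symm⟩ hY

theorem quotient_of_le (hF : IsFormation F) {X : Type} [Group X] [Finite X] {K L : Subgroup X}
    [K.Normal] [L.Normal] (h : K ≤ L) (hK : F (X ⧸ K)) : F (X ⧸ L) :=
  hF.iso_closed _ _ ⟨QuotientGroup.quotientQuotientEquivQuotient K L h⟩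
    (hF.quotient_closed _ _ hK)

theorem prod (hF : IsFormation F) {X Y : Type} [Group X] [Finite X] [Group Y] [Finite Y]
    (hX : F X) (hY : F Y) : F (X × Y) := by
  refine hF.subdirect_closed _ (MonoidHom.fst X Y).ker (MonoidHom.snd X Y).ker ?_
    (hF.quotient_ker_mem _ (fun x => ⟨(x, 1), rfl⟩) hX)
    (hF.quotient_ker_mem _ (fun y => ⟨(1, y), rfl⟩) hY)
  ext z
  simp [Subgroup.mem_prod, Prod.ext_iff]

theorem quotient_inf (hF : IsFormation F) {X : Type} [Group X] [Finite X] {K L : Subgroup X}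
    [K.Normal] [L.Normal] (hK : F (X ⧸ K)) (hL : F (X ⧸ L)) : F (X ⧸ (K ⊓ L)) := by
  refine hF.subdirect_closed _ (K.map (QuotientGroup.mk' _)) (L.map (QuotientGroup.mk' _)) ?_
    (hF.iso_closed _ _ ⟨(QuotientGroup.quotientQuotientEquivQuotient _ _ inf_le_left).symm⟩ hK)
    (hF.iso_closed _ _ ⟨(QuotientGroup.quotientQuotientEquivQuotient _ _ inf_le_right).symm⟩ hL)
  rw [← Subgroup.map_comap_eq_self_of_surjective (QuotientGroup.mk'_surjective _) (_ ⊓ _),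
    Subgroup.comap_inf, Subgroup.comap_map_eq, Subgroup.comap_map_eq, QuotientGroup.ker_mk',
    sup_of_le_left inf_le_left, sup_of_le_left inf_le_right, QuotientGroup.map_mk'_self]

end IsFormation

/-- The group of matrices `[[1, t, z], [0, 1, x], [0, 0, 1]]` with `t ∈ R` and `x, z ∈ V`. -/
@[ext]
structure Heis (R V : Type*) where
  t : R
  x : V
  z : V

namespace Heis

section Ring

variable {R V : Type*} [Ring R] [AddCommGroup V]

instance : One (Heis R V) := ⟨⟨0, 0, 0⟩⟩

@[simp] theorem one_t : (1 : Heis R V).t = 0 := rfl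
@[simp] theorem one_x : (1 : Heis R V).x = 0 := rfl
@[simp] theorem one_z : (1 : Heis R V).z = 0 := rfl

def ofZ (z : V) : Heis R V := ⟨0, 0, z⟩

@[simp] theorem ofZ_t (z : V) : (ofZ z : Heis R V).t = 0 := rfl
@[simp] theorem ofZ_x (z : V) : (ofZ z : Heis R V).x = 0 := rfl
@[simp] theorem ofZ_z (z : V) : (ofZ z : Heis R V).z = z := rfl

theorem ofZ_zero : (ofZ 0 : Heis R V) = 1 := rfl

theorem ofZ_injective : Function.Injective (ofZ : V → Heis R V) :=
  fun _ _ h => congrArg Heis.z h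

theorem eq_ofZ {a : Heis R V} (ht : a.t = 0) (hx : a.x = 0) : a = ofZ a.z := by
  ext <;> simp [ht, hx]

variable [Module R V]

instance : Mul (Heis R V) := ⟨fun a b => ⟨a.t + b.t, a.x + b.x, a.z + a.t • b.x + b.z⟩⟩
instance : Inv (Heis R V) := ⟨fun a => ⟨-a.t, -a.x, a.t • a.x - a.z⟩⟩

@[simp] theorem mul_t (a b : Heis R V) : (a * b).t = a.t + b.t := rfl
@[simp] theorem mul_x (a b : Heis R V) : (a * b).x = a.x + b.x := rfl
@[simp] theorem mul_z (a b : Heis R V) : (a * b).z = a.z + a.t • b.x + b.z := rfl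
@[simp] theorem inv_t (a : Heis R V) : a⁻¹.t = -a.t := rfl
@[simp] theorem inv_x (a : Heis R V) : a⁻¹.x = -a.x := rfl
@[simp] theorem inv_z (a : Heis R V) : a⁻¹.z = a.t • a.x - a.z := rfl

instance : Group (Heis R V) where
  mul_assoc a b c := by ext <;> simp [smul_add, add_smul] <;> abel
  one_mul a := by ext <;> simp
  mul_one a := by ext <;> simp
  inv_mul_cancel a := by
    ext <;> simp [neg_smul]
    abel

def tHom : Heis R V →* Multiplicative R where
  toFun a := .ofAdd a.t
  map_one' := rfl
  map_mul' _ _ := rfl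

def xHom : Heis R V →* Multiplicative V where
  toFun a := .ofAdd a.x
  map_one' := rfl
  map_mul' _ _ := rfl

theorem ofZ_add (y z : V) : (ofZ (y + z) : Heis R V) = ofZ y * ofZ z := by
  ext <;> simp

theorem ofZ_mem_center (z : V) : ofZ z ∈ Subgroup.center (Heis R V) :=
  Subgroup.mem_center_iff.mpr fun a => by ext <;> simp [add_comm]

theorem ofZ_eq_commutator (z : V) :
    (ofZ z : Heis R V) = ⁅(⟨1, 0, 0⟩ : Heis R V), ⟨0, z, 0⟩⁆ := by
  ext <;> simp [commutatorElement_def]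

theorem ofZ_mem_frattini (z : V) : ofZ z ∈ frattini (Heis R V) := by
  have h := ofZ_mem_center (R := R) z
  rw [ofZ_eq_commutator] at h ⊢
  exact commutatorElement_mem_frattini_of_mem_center h

theorem ofZ_nsmul (z : V) (k : ℕ) : (ofZ (k • z) : Heis R V) = ofZ z ^ k := by
  induction k with
  | zero => simp [ofZ_zero]
  | succ k ih => rw [succ_nsmul, ofZ_add, ih, pow_succ]

instance [Finite R] [Finite V] : Finite (Heis R V) :=
  Finite.of_injective (fun a => (a.t, a.x, a.z)) fun a b h => by
    simp only [Prod.mk.injEq] at h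
    ext <;> simp [h]

end Ring

section ZMod

variable {n : ℕ} {V : Type*} [AddCommGroup V] [Module (ZMod n) V]

theorem isPGroup : IsPGroup n (Heis (ZMod n) V) := fun a => ⟨2, by
  have ht : (a ^ n).t = n • a.t := congrArg Multiplicative.toAdd (map_pow tHom a n)
  have hx : (a ^ n).x = n • a.x := congrArg Multiplicative.toAdd (map_pow xHom a n)
  rw [ZModModule.char_nsmul_eq_zero] at ht hx
  rw [pow_two, pow_mul, eq_ofZ ht hx, ← ofZ_nsmul, ZModModule.char_nsmul_eq_zero, ofZ_zero]⟩

def congr (e : V ≃+ V) : Heis (ZMod n) V ≃* Heis (ZMod n) V where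
  toFun a := ⟨a.t, e a.x, e a.z⟩
  invFun a := ⟨a.t, e.symm a.x, e.symm a.z⟩
  left_inv a := by simp
  right_inv a := by simp
  map_mul' a b := by ext <;> simp [ZMod.map_smul]

def autHom : MulAut (Multiplicative V) →* MulAut (Heis (ZMod n) V) where
  toFun e := congr (AddEquiv.toMultiplicative.symm e)
  map_one' := rfl
  map_mul' _ _ := rfl

@[simp] theorem autHom_apply (e : MulAut (Multiplicative V)) (a : Heis (ZMod n) V) :
    autHom e a = ⟨a.t, (e (.ofAdd a.x)).toAdd, (e (.ofAdd a.z)).toAdd⟩ := rfl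

end ZMod

end Heis

section

open SemidirectProduct

variable {p : ℕ} {V G Q : Type} [AddCommGroup V] [Module (ZMod p) V] [Group G] [Group Q]
  {ρ : Q →* MulAut (Multiplicative V)} {π : G →* Q} {j : Multiplicative V →* G}

variable (p ρ π)

abbrev HeisExt : Type := Heis (ZMod p) V ⋊[Heis.autHom.comp (ρ.comp π)] G

def HeisExt.toSemidirect : HeisExt p ρ π →* Multiplicative V ⋊[ρ] Q :=
  SemidirectProduct.map Heis.xHom π fun _ => rfl

def HeisExt.toProd : HeisExt p ρ π →* Multiplicative (ZMod p) × Q :=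
  (lift Heis.tHom 1 fun _ => by ext; simp [Heis.tHom]).prod (π.comp rightHom)

def HeisExt.toHeisSemidirect : HeisExt p ρ π →* Heis (ZMod p) V ⋊[Heis.autHom.comp ρ] Q :=
  SemidirectProduct.map (MonoidHom.id _) π fun _ => rfl

variable {π}

def HeisExt.antidiag (hj : ∀ v, π (j v) = 1) : Multiplicative V →* HeisExt p ρ π where
  toFun v := ⟨Heis.ofZ v.toAdd, j v⁻¹⟩
  map_one' := by ext <;> simp [Heis.ofZ_zero]
  map_mul' v w := by ext <;> simp [hj, Heis.ofZ_add, mul_comm]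

variable {p ρ}

namespace HeisExt

theorem toSemidirect_surjective (hπ : Function.Surjective π) :
    Function.Surjective (toSemidirect p ρ π) := by
  intro y
  obtain ⟨g, hg⟩ := hπ y.right
  exact ⟨⟨⟨0, y.left.toAdd, 0⟩, g⟩, SemidirectProduct.ext rfl hg⟩

theorem toProd_surjective (hπ : Function.Surjective π) :
    Function.Surjective (toProd p ρ π) := by
  intro y
  obtain ⟨g, hg⟩ := hπ y.2
  exact ⟨⟨⟨y.1.toAdd, 0, 0⟩, g⟩,
    Prod.ext (by simp [toProd, Heis.tHom]) (by simp [toProd, hg])⟩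

theorem exists_eq_inl_ofZ_mul (hker : π.ker = j.range) {D : Subgroup (HeisExt p ρ π)}
    (hD : ∀ v, ∃ c, (⟨Heis.ofZ c, j v⟩ : HeisExt p ρ π) ∈ D) {z : HeisExt p ρ π}
    (hz : z ∈ (toSemidirect p ρ π).ker ⊓ (toProd p ρ π).ker) :
    ∃ c, ∃ d ∈ D, z = inl (Heis.ofZ c) * d := by
  obtain ⟨hz₁, hz₂⟩ := hz
  have hx : z.left.x = 0 := congrArg (fun y => y.left.toAdd) hz₁
  have hπz : π z.right = 1 := congrArg SemidirectProduct.right hz₁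
  have ht : z.left.t = 0 := by
    have h := congrArg Prod.fst hz₂
    change Multiplicative.ofAdd z.left.t * 1 = 1 at h
    simpa using h
  obtain ⟨w, hw⟩ : z.right ∈ j.range := hker ▸ hπz
  obtain ⟨c, hc⟩ := hD w
  refine ⟨z.left.z - c, _, hc, SemidirectProduct.ext ?_ (by simp [hw])⟩
  simp [← Heis.ofZ_add, ← Heis.eq_ofZ ht hx]

theorem antidiag_range_normal (hj : ∀ v, π (j v) = 1)
    (hconj : ∀ g v, j (ρ (π g) v) = g * j v * g⁻¹) : (antidiag p ρ hj).range.Normal := by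
  refine normal_of_conj_mem _ ?_ ?_
  · rintro n _ ⟨v, rfl⟩
    refine ⟨v, ?_⟩
    ext <;> simp [antidiag, hj]
    abel
  · rintro g _ ⟨v, rfl⟩
    refine ⟨ρ (π g) v, ?_⟩
    ext <;> simp [antidiag, hj, hconj, mul_assoc]

theorem antidiag_range_inf_ker (hj : ∀ v, π (j v) = 1) :
    (antidiag p ρ hj).range ⊓ (toHeisSemidirect p ρ π).ker = ⊥ := by
  refine eq_bot_iff.mpr ?_
  rintro _ ⟨⟨v, rfl⟩, hv⟩
  have h1 : Heis.ofZ v.toAdd = Heis.ofZ (0 : V) := congrArg SemidirectProduct.left hv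
  rw [Subgroup.mem_bot, toAdd_eq_zero.mp (Heis.ofZ_injective h1), map_one]

variable [NeZero p] [Finite V] [Finite G] [Finite Q] {F : GroupClass}

theorem quotient_ker_inf_mem (hF : IsFormation F) (hp : F (Multiplicative (ZMod p)))
    (hπ : Function.Surjective π) (hVQ : F (Multiplicative V ⋊[ρ] Q)) :
    F (HeisExt p ρ π ⧸ (toSemidirect p ρ π).ker ⊓ (toProd p ρ π).ker) :=
  hF.quotient_inf (hF.quotient_ker_mem _ (toSemidirect_surjective hπ) hVQ)
    (hF.quotient_ker_mem _ (toProd_surjective hπ)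
      (hF.prod hp (hF.of_surjective rightHom rightHom_surjective hVQ)))

theorem quotient_mem (hF : IsFormation F) (hsat : NpSaturated p F)
    (hp : F (Multiplicative (ZMod p))) (hπ : Function.Surjective π)
    (hker : π.ker = j.range) (hVQ : F (Multiplicative V ⋊[ρ] Q))
    (D : Subgroup (HeisExt p ρ π)) [D.Normal]
    (hD : ∀ v, ∃ c, (⟨Heis.ofZ c, j v⟩ : HeisExt p ρ π) ∈ D) :
    F (HeisExt p ρ π ⧸ D) := by
  set W := ((QuotientGroup.mk' D).comp (inl : _ →* HeisExt p ρ π)).range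
  have : W.Normal := by
    rw [show W = inl.range.map (QuotientGroup.mk' D) from MonoidHom.range_comp _ _,
      range_inl_eq_ker_rightHom]
    exact Subgroup.Normal.map inferInstance _ (QuotientGroup.mk'_surjective D)
  set M := (frattini W).map W.subtype
  have : M.Normal := ConjAct.normal_of_characteristic_of_normal
  refine hsat _ W (Heis.isPGroup.of_surjective _ (MonoidHom.rangeRestrict_surjective _)) M rfl ?_
  set κ := (QuotientGroup.mk' M).comp (QuotientGroup.mk' D)
  have hκ : Function.Surjective κ :=
    (QuotientGroup.mk'_surjective M).comp (QuotientGroup.mk'_surjective D)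
  have hle : (toSemidirect p ρ π).ker ⊓ (toProd p ρ π).ker ≤ κ.ker := by
    intro z hz
    obtain ⟨c, d, hd, rfl⟩ := exists_eq_inl_ofZ_mul hker hD hz
    have hcM : QuotientGroup.mk' D (inl (Heis.ofZ c)) ∈ M :=
      map_frattini_le_map_frattini_range _ ⟨_, Heis.ofZ_mem_frattini c, rfl⟩
    simpa [κ, (QuotientGroup.eq_one_iff _).mpr hd] using hcM
  exact hF.iso_closed _ _ ⟨QuotientGroup.quotientKerEquivOfSurjective κ hκ⟩
    (hF.quotient_of_le hle (quotient_ker_inf_mem hF hp hπ hVQ))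

end HeisExt

end

theorem NpSaturated.mem_of_semidirectProduct_mem {p : ℕ} [NeZero p] {V G Q : Type}
    [AddCommGroup V] [Module (ZMod p) V] [Finite V] [Group G] [Finite G] [Group Q] [Finite Q]
    {F : GroupClass} (hF : IsFormation F) (hsat : NpSaturated p F)
    (hp : F (Multiplicative (ZMod p))) (ρ : Q →* MulAut (Multiplicative V)) (π : G →* Q)
    (hπ : Function.Surjective π) (j : Multiplicative V →* G) (hker : π.ker = j.range)
    (hconj : ∀ g v, j (ρ (π g) v) = g * j v * g⁻¹) (hVQ : F (Multiplicative V ⋊[ρ] Q)) :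
    F G := by
  have hj : ∀ v, π (j v) = 1 := fun v => by rw [← MonoidHom.mem_ker, hker]; exact ⟨v, rfl⟩
  have : (HeisExt.antidiag p ρ hj).range.Normal := HeisExt.antidiag_range_normal hj hconj
  have hB := HeisExt.quotient_mem hF hsat hp hπ hker hVQ (HeisExt.antidiag p ρ hj).range
    fun v => ⟨(v⁻¹).toAdd, v⁻¹, by simp [HeisExt.antidiag]⟩
  have hC := HeisExt.quotient_mem hF hsat hp hπ hker hVQ (HeisExt.toHeisSemidirect p ρ π).ker
    fun v => ⟨0, SemidirectProduct.ext rfl (hj v)⟩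
  exact hF.of_surjective SemidirectProduct.rightHom SemidirectProduct.rightHom_surjective
    (hF.subdirect_closed _ _ _ (HeisExt.antidiag_range_inf_ker hj) hB hC)

theorem statement_2_general (p : ℕ) (hp : p.Prime) (F : GroupClass) (hF : IsFormation F)
    (hsat : NpSaturated p F)
    (hNp : ∀ (P : Type) [Group P] [Finite P], IsPGroup p P → F P)
    (G : Type) [Group G] [Finite G] (N : Subgroup G) [N.Normal]
    (hab : ∀ a b : N, a * b = b * a)
    (hord : ∀ x : N, x ≠ 1 → orderOf x = p)
    (φ : G ⧸ N →* MulAut ↥N)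
    (hφ : ∀ (g : G) (n : N), (↑(φ (QuotientGroup.mk g) n) : G) = g * ↑n * g⁻¹)
    (hsd : F (↥N ⋊[φ] (G ⧸ N))) :
    F G := by
  have : NeZero p := ⟨hp.ne_zero⟩
  let : CommGroup N := { mul_comm := hab }
  let : Module (ZMod p) (Additive N) := AddCommGroup.zmodModule fun x => by
    by_cases hx : x.toMul = 1
    · rw [← ofMul_toMul x, hx, ofMul_one, smul_zero]
    · exact congrArg Additive.ofMul (hord _ hx ▸ pow_orderOf_eq_one x.toMul)
  exact NpSaturated.mem_of_semidirectProduct_mem (V := Additive N) hF hsat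
    (hNp _ ZModModule.isPGroup_multiplicative) φ (QuotientGroup.mk' N)
    (QuotientGroup.mk'_surjective N) N.subtype
    (by rw [QuotientGroup.ker_mk']; exact N.range_subtype.symm) hφ hsd

/-- Let `𝔉` be an `ℕ_p`-saturated formation containing all finite `p`-groups and
`N` an elementary abelian normal `p`-subgroup of `G`.  If `N ⋊ (G/N) ∈ 𝔉` (with the action
induced by conjugation), then `G ∈ 𝔉`. -/
theorem statement_2 (p : ℕ) (hp : p.Prime) (F : GroupClass) (hF : IsFormation F)
    (hsat : NpSaturated p F)
    (hNp : ∀ (P : Type) [Group P] [Finite P], IsPGroup p P → F P)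
    (G : Type) [Group G] [Finite G] (N : Subgroup G) [N.Normal]
    (hpgrp : IsPGroup p N)
    (hab : ∀ a b : N, a * b = b * a)
    (hord : ∀ x : N, x ≠ 1 → orderOf x = p)
    (φ : G ⧸ N →* MulAut ↥N)
    (hφ : ∀ (g : G) (n : N), (↑(φ (QuotientGroup.mk g) n) : G) = g * ↑n * g⁻¹)
    (hsd : F (↥N ⋊[φ] (G ⧸ N))) :
    F G :=
  statement_2_general p hp F hF hsat hNp G N hab hord φ hφ hsd
end

section
/- Let 𝔉 be a formation of finite groups and G ∈ 𝔉. Let S, R, K be normal subgroups of G with S ≤ R and with K centralizing R/S (i.e., krk⁻¹r⁻¹ ∈ S for all k ∈ K and r ∈ R). Then the semidirect product (R/S) ⋊ (G/K) belongs to 𝔉, where G/K acts on R/S by the action induced by conjugation. -/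
set_option maxHeartbeats 1000000
set_option linter.unusedVariables false

/-- If `G ∈ 𝔉`, `S ≤ R` and `K` are normal subgroups of `G`, and `K` centralizes
`R/S`, then `(R/S) ⋊ (G/K) ∈ 𝔉` (with the action induced by conjugation). -/
theorem statement_5 (F : GroupClass) (hF : IsFormation F)
    (G : Type) [Group G] [Finite G] (hG : F G)
    (S R K : Subgroup G) [S.Normal] [hR : R.Normal] [K.Normal] (hSR : S ≤ R)
    (hcent : ∀ k ∈ K, ∀ r ∈ R, k * r * k⁻¹ * r⁻¹ ∈ S)
    (φ : G ⧸ K →* MulAut (↥R ⧸ S.subgroupOf R))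
    (hφ : ∀ (g : G) (r : R),
      φ (QuotientGroup.mk g) (QuotientGroup.mk r) =
        QuotientGroup.mk (⟨g * ↑r * g⁻¹, hR.conj_mem ↑r r.2 g⟩ : R)) :
    F ((↥R ⧸ S.subgroupOf R) ⋊[φ] (G ⧸ K)) := by
  classical
  -- The fibre product subgroup X = {(a,b) ∈ G × G | a * b⁻¹ ∈ R}
  let X : Subgroup (G × G) :=
    { carrier := {p : G × G | p.1 * p.2⁻¹ ∈ R}
      one_mem' := by simpa using R.one_mem
      mul_mem' := by
        intro p q hp hq
        show (p.1 * q.1) * (p.2 * q.2)⁻¹ ∈ R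
        have key : (p.1 * q.1) * (p.2 * q.2)⁻¹ =
            (p.1 * p.2⁻¹) * (p.2 * (q.1 * q.2⁻¹) * p.2⁻¹) := by group
        rw [key]
        exact R.mul_mem hp (hR.conj_mem _ hq p.2)
      inv_mem' := by
        intro p hp
        show p.1⁻¹ * (p.2⁻¹)⁻¹ ∈ R
        have key : p.1⁻¹ * (p.2⁻¹)⁻¹ = (p.2⁻¹ * (p.1 * p.2⁻¹) * p.2⁻¹⁻¹)⁻¹ := by group
        rw [key]
        exact R.inv_mem (hR.conj_mem _ hp p.2⁻¹) }
  have hXmem : ∀ p : G × G, p ∈ X ↔ p.1 * p.2⁻¹ ∈ R := fun p => Iff.rfl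
  -- the surjective homomorphism ψ : X → (R/S) ⋊ (G/K)
  let ψ : ↥X →* (↥R ⧸ S.subgroupOf R) ⋊[φ] (G ⧸ K) :=
    { toFun := fun x =>
        ⟨QuotientGroup.mk (⟨x.1.1 * x.1.2⁻¹, x.2⟩ : R), QuotientGroup.mk x.1.2⟩
      map_one' := by
        refine SemidirectProduct.ext ?_ rfl
        show QuotientGroup.mk (⟨(1:G) * (1:G)⁻¹, _⟩ : R) = QuotientGroup.mk (1 : R)
        congr 1
        ext
        simp
      map_mul' := by
        intro x y
        refine SemidirectProduct.ext ?_ rfl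
        show QuotientGroup.mk (⟨(x.1.1 * y.1.1) * (x.1.2 * y.1.2)⁻¹, _⟩ : R) =
          QuotientGroup.mk (⟨x.1.1 * x.1.2⁻¹, x.2⟩ : R) *
            φ (QuotientGroup.mk x.1.2) (QuotientGroup.mk (⟨y.1.1 * y.1.2⁻¹, y.2⟩ : R))
        rw [hφ]
        rw [← QuotientGroup.mk_mul]
        congr 1
        ext
        show (x.1.1 * y.1.1) * (x.1.2 * y.1.2)⁻¹ =
          (x.1.1 * x.1.2⁻¹) * (x.1.2 * (y.1.1 * y.1.2⁻¹) * x.1.2⁻¹)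
        group }
  have hψsurj : Function.Surjective ψ := by
    rintro ⟨n, g⟩
    obtain ⟨r, rfl⟩ := QuotientGroup.mk_surjective n
    obtain ⟨g, rfl⟩ := QuotientGroup.mk_surjective g
    refine ⟨⟨((r : G) * g, g), ?_⟩, ?_⟩
    · show (r : G) * g * g⁻¹ ∈ R
      simpa using r.2
    · refine SemidirectProduct.ext ?_ rfl
      show QuotientGroup.mk (⟨(r : G) * g * g⁻¹, _⟩ : R) = QuotientGroup.mk r
      congr 1
      ext
      simp
  -- the two projections X → G are surjective with trivial intersection of kernels
  let π₁ : ↥X →* G := (MonoidHom.fst G G).comp X.subtype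
  let π₂ : ↥X →* G := (MonoidHom.snd G G).comp X.subtype
  have hπ₁ : Function.Surjective π₁ := fun g =>
    ⟨⟨(g, g), by show g * g⁻¹ ∈ R; simpa using R.one_mem⟩, rfl⟩
  have hπ₂ : Function.Surjective π₂ := fun g =>
    ⟨⟨(g, g), by show g * g⁻¹ ∈ R; simpa using R.one_mem⟩, rfl⟩
  have hinter : π₁.ker ⊓ π₂.ker = ⊥ := by
    rw [eq_bot_iff]
    rintro x ⟨h1, h2⟩
    have e1 : x.1.1 = 1 := h1
    have e2 : x.1.2 = 1 := h2
    have : x = 1 := by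
      ext
      · exact e1
      · exact e2
    simp [this, Subgroup.mem_bot]
  -- X ∈ F by subdirect closure
  have hFX : F ↥X := by
    refine hF.subdirect_closed ↥X π₁.ker π₂.ker hinter ?_ ?_
    · exact hF.iso_closed G _
        ⟨(QuotientGroup.quotientKerEquivOfSurjective π₁ hπ₁).symm⟩ hG
    · exact hF.iso_closed G _
        ⟨(QuotientGroup.quotientKerEquivOfSurjective π₂ hπ₂).symm⟩ hG
  -- conclude via the quotient by ker ψ
  exact hF.iso_closed (↥X ⧸ ψ.ker) _
    ⟨QuotientGroup.quotientKerEquivOfSurjective ψ hψsurj⟩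
    (hF.quotient_closed ↥X ψ.ker hFX)
end

section
/- Let G be a nontrivial finite group and let H be the normal subgroup of G containing Φ(G) such that H/Φ(G) is the socle of G/Φ(G), i.e., H/Φ(G) is the subgroup generated by all minimal normal subgroups of G/Φ(G). Then C_G(H) ≤ H. -/
set_option maxHeartbeats 1000000
set_option linter.unusedVariables false

/-! ### Auxiliary lemmas for statement 6 -/

section Statement6Aux

variable {Q : Type} [Group Q]

theorem aux_conj_self {a h : Q} (hc : a * h = h * a) : a * h * a⁻¹ = h := by
  rw [hc]; group

theorem aux_conj_inv {a x : Q} (hc : a * x = x * a) : a⁻¹ * x * a = x := by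
  have h1 : a⁻¹ * x * a = a⁻¹ * (x * a) := by group
  rw [h1, ← hc]; group

/-- Dedekind modular law (one inclusion), for `N` normal with `N ≤ B`. -/
theorem aux_dedekind (N M B : Subgroup Q) [hN : N.Normal] (hNB : N ≤ B) :
    B ⊓ (N ⊔ M) ≤ N ⊔ (B ⊓ M) := by
  intro x hx
  obtain ⟨hxB, hxNM⟩ := Subgroup.mem_inf.mp hx
  rw [← SetLike.mem_coe, Subgroup.normal_mul] at hxNM
  obtain ⟨n, hn, m, hm, rfl⟩ := hxNM
  have hmB : m ∈ B := by
    have := B.mul_mem (B.inv_mem (hNB hn)) hxB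
    simpa [mul_assoc] using this
  exact Subgroup.mul_mem _ (Subgroup.mem_sup_left hn)
    (Subgroup.mem_sup_right (Subgroup.mem_inf.mpr ⟨hmB, hm⟩))

theorem aux_le_frattini {N : Subgroup Q} (h : ∀ M : Subgroup Q, IsCoatom M → N ≤ M) :
    N ≤ frattini Q := by
  show N ≤ Order.radical (Subgroup Q)
  rw [Order.radical]
  exact le_iInf fun M => le_iInf fun hM => h M hM

/-- If `N` is normal in `Q`, `N ≤ B`, and `N` lies in the Frattini subgroup of `B`,
then `N` lies in the Frattini subgroup of `Q`. -/
theorem aux_frattini_transfer [Finite Q] {N B : Subgroup Q} [hN : N.Normal]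
    (hNB : N ≤ B) (hfr : N.subgroupOf B ≤ frattini B) : N ≤ frattini Q := by
  apply aux_le_frattini
  intro M hM
  by_contra hnle
  have hsup : N ⊔ M = ⊤ := hM.2 _ (right_lt_sup.mpr hnle)
  have hB : N ⊔ (B ⊓ M) = B := by
    refine le_antisymm (sup_le hNB inf_le_left) ?_
    calc B = B ⊓ (N ⊔ M) := by rw [hsup, inf_top_eq]
      _ ≤ N ⊔ (B ⊓ M) := aux_dedekind N M B hNB
  have hmapeq : Subgroup.map B.subtype (N.subgroupOf B ⊔ (B ⊓ M).subgroupOf B) =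
      Subgroup.map B.subtype (⊤ : Subgroup B) := by
    rw [Subgroup.map_sup, Subgroup.subgroupOf_map_subtype, Subgroup.subgroupOf_map_subtype]
    rw [← MonoidHom.range_eq_map, Subgroup.range_subtype]
    rw [inf_of_le_left hNB, inf_of_le_left (inf_le_left : B ⊓ M ≤ B)]
    exact hB
  have htopB : N.subgroupOf B ⊔ (B ⊓ M).subgroupOf B = ⊤ :=
    Subgroup.map_injective B.subtype_injective hmapeq
  have hKtop : (B ⊓ M).subgroupOf B = ⊤ := by
    apply frattini_nongenerating
    rw [eq_top_iff, ← htopB]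
    exact sup_le (le_trans hfr le_sup_right) le_sup_left
  have hBM : B ≤ M := le_trans (Subgroup.subgroupOf_eq_top.mp hKtop) inf_le_right
  exact hnle (le_trans hNB hBM)

/-- Every nontrivial normal subgroup of a finite group contains a minimal normal subgroup. -/
theorem aux_exists_minimal_normal [Finite Q] {D : Subgroup Q} (hD : D.Normal) (hne : D ≠ ⊥) :
    ∃ M : Subgroup Q, IsMinimalNormal M ∧ M ≤ D := by
  obtain ⟨M, hM, hmin⟩ := wellFounded_lt.has_min
    {N : Subgroup Q | N.Normal ∧ N ≠ ⊥ ∧ N ≤ D} ⟨D, hD, hne, le_rfl⟩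
  refine ⟨M, ⟨hM.1, hM.2.1, ?_⟩, hM.2.2⟩
  intro M' hM' hlt
  by_contra hne'
  exact hmin M' ⟨hM', hne', le_trans hlt.le hM.2.2⟩ hlt

/-- Gaschütz-style complementation for abelian normal subgroups avoiding the Frattini
subgroup. -/
theorem aux_gaschutz [Finite Q] {A : Subgroup Q} [hA : A.Normal]
    (hab : ∀ a ∈ A, ∀ b ∈ A, a * b = b * a) (hfr : A ⊓ frattini Q = ⊥) :
    ∃ B : Subgroup Q, A ⊔ B = ⊤ ∧ A ⊓ B = ⊥ := by
  obtain ⟨B, hB, hmin⟩ := wellFounded_lt.has_min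
    {B : Subgroup Q | A ⊔ B = ⊤} ⟨⊤, by simp⟩
  refine ⟨B, hB, ?_⟩
  set N := A ⊓ B with hNdef
  have hNA : N ≤ A := inf_le_left
  have hNB : N ≤ B := inf_le_right
  have hNnorm : N.Normal := by
    rw [← Subgroup.normalizer_eq_top_iff, eq_top_iff, ← hB]
    refine sup_le ?_ ?_
    · intro a ha
      rw [Subgroup.mem_normalizer_iff]
      intro h
      constructor
      · intro hh
        rw [aux_conj_self (hab a ha h (hNA hh))]
        exact hh
      · intro hh
        have key : h = a * h * a⁻¹ := by
          rw [← aux_conj_inv (hab a ha _ (hNA hh))]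
          group
        rw [key]; exact hh
    · intro b hb
      rw [Subgroup.mem_normalizer_iff]
      intro h
      constructor
      · intro hh
        exact Subgroup.mem_inf.mpr ⟨hA.conj_mem h (hNA hh) b,
          B.mul_mem (B.mul_mem hb (hNB hh)) (B.inv_mem hb)⟩
      · intro hh
        have he : h = b⁻¹ * (b * h * b⁻¹) * b := by group
        rw [he]
        refine Subgroup.mem_inf.mpr ⟨?_, ?_⟩
        · have := hA.conj_mem _ (hNA hh) b⁻¹
          simpa using this
        · exact B.mul_mem (B.mul_mem (B.inv_mem hb) (hNB hh)) hb
  haveI := hNnorm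
  have hfrB : N.subgroupOf B ≤ frattini B := by
    apply aux_le_frattini
    intro M' hM'
    by_contra hnle
    have hsup' : N.subgroupOf B ⊔ M' = ⊤ := hM'.2 _ (right_lt_sup.mpr hnle)
    set M0 := Subgroup.map B.subtype M' with hM0def
    have hM0B : M0 ≤ B := Subgroup.map_subtype_le M'
    have hNM0 : N ⊔ M0 = B := by
      have := congrArg (Subgroup.map B.subtype) hsup'
      rw [Subgroup.map_sup, Subgroup.subgroupOf_map_subtype, inf_of_le_left hNB,
        ← MonoidHom.range_eq_map, Subgroup.range_subtype] at this
      exact this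
    have hAM0 : A ⊔ M0 = ⊤ := by
      have h1 : A ⊔ M0 = A ⊔ (N ⊔ M0) := by
        rw [← sup_assoc, sup_of_le_left hNA]
      rw [h1, hNM0, hB]
    have hM0lt : M0 < B := by
      rcases lt_or_eq_of_le hM0B with h | h
      · exact h
      · exfalso
        have : M' = ⊤ := by
          apply Subgroup.map_injective B.subtype_injective
          rw [← hM0def, h, ← MonoidHom.range_eq_map, Subgroup.range_subtype]
        exact hM'.1 this
    exact hmin M0 hAM0 hM0lt
  have hbot : N ≤ A ⊓ frattini Q := le_inf hNA (aux_frattini_transfer hNB hfrB)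
  rw [hfr] at hbot
  exact le_bot_iff.mp hbot

/-- In a finite group with trivial Frattini subgroup, the centralizer of the socle is
contained in the socle. -/
theorem aux_key (Q : Type) [Group Q] [Finite Q] (hfr : frattini Q = ⊥) :
    Subgroup.centralizer ((socle Q : Subgroup Q) : Set Q) ≤ socle Q := by
  set S := socle Q with hSdef
  haveI hSnorm : S.Normal := normal_sSup (fun N hN => hN.1)
  set C := Subgroup.centralizer (S : Set Q) with hCdef
  haveI hCnorm : C.Normal := centralizer_normal_of_normal S
  have hcomm : ∀ c ∈ C, ∀ s ∈ S, s * c = c * s := by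
    intro c hc s hs
    exact Subgroup.mem_centralizer_iff.mp hc s hs
  set A := C ⊓ S with hAdef
  haveI hAnorm : A.Normal := inf_normal C S
  have hAC : A ≤ C := inf_le_left
  have hAS : A ≤ S := inf_le_right
  have hab : ∀ a ∈ A, ∀ b ∈ A, a * b = b * a := by
    intro a ha b hb
    exact hcomm b hb.1 a ha.2
  obtain ⟨B, hsup, hinf⟩ := aux_gaschutz hab (by rw [hfr, inf_bot_eq])
  have hDnorm : (C ⊓ B).Normal := by
    rw [← Subgroup.normalizer_eq_top_iff, eq_top_iff, ← hsup]
    refine sup_le ?_ ?_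
    · intro a ha
      rw [Subgroup.mem_normalizer_iff]
      intro h
      constructor
      · intro hh
        rw [aux_conj_self (hcomm h hh.1 a (hAS ha))]
        exact hh
      · intro hh
        have key : h = a * h * a⁻¹ := by
          rw [← aux_conj_inv (hcomm _ hh.1 a (hAS ha))]
          group
        rw [key]; exact hh
    · intro b hb
      rw [Subgroup.mem_normalizer_iff]
      intro h
      constructor
      · intro hh
        exact Subgroup.mem_inf.mpr ⟨hCnorm.conj_mem h hh.1 b,
          B.mul_mem (B.mul_mem hb hh.2) (B.inv_mem hb)⟩
      · intro hh
        have he : h = b⁻¹ * (b * h * b⁻¹) * b := by group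
        rw [he]
        refine Subgroup.mem_inf.mpr ⟨?_, ?_⟩
        · have := hCnorm.conj_mem _ hh.1 b⁻¹
          simpa using this
        · exact B.mul_mem (B.mul_mem (B.inv_mem hb) hh.2) hb
  have hD : C ⊓ B = ⊥ := by
    by_contra hne
    obtain ⟨M, hM, hMle⟩ := aux_exists_minimal_normal hDnorm hne
    have hMS : M ≤ S := le_sSup hM
    have hMbot : M ≤ A ⊓ B :=
      le_inf (le_inf (hMle.trans inf_le_left) hMS) (hMle.trans inf_le_right)
    rw [hinf] at hMbot
    exact hM.2.1 (le_bot_iff.mp hMbot)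
  have hCA : C ≤ A := by
    calc C = C ⊓ (A ⊔ B) := by rw [hsup, inf_top_eq]
      _ ≤ A ⊔ (C ⊓ B) := aux_dedekind A B C hAC
      _ = A := by rw [hD, sup_bot_eq]
  exact hCA.trans hAS

/-- The Frattini subgroup of `G/Φ(G)` is trivial. -/
theorem aux_frattini_quotient (G : Type) [Group G] [Finite G] :
    frattini (G ⧸ frattini G) = ⊥ := by
  set phi := QuotientGroup.mk' (frattini G) with hphidef
  have hker : phi.ker = frattini G := QuotientGroup.ker_mk' _
  have hsurj : Function.Surjective phi := QuotientGroup.mk'_surjective _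
  have h1 : Subgroup.comap phi (frattini (G ⧸ frattini G)) ≤ frattini G := by
    apply aux_le_frattini
    intro M hM
    have hkerM : frattini G ≤ M := frattini_le_coatom hM
    have hcomapmap : Subgroup.comap phi (Subgroup.map phi M) = M := by
      rw [Subgroup.comap_map_eq, hker, sup_of_le_left hkerM]
    have hcoat : IsCoatom (Subgroup.map phi M) := by
      constructor
      · intro htop
        have := congrArg (Subgroup.comap phi) htop
        rw [hcomapmap, Subgroup.comap_top] at this
        exact hM.1 this
      · intro K hK
        have hlt : M < Subgroup.comap phi K := by
          rw [← hcomapmap]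
          refine lt_of_le_of_ne (Subgroup.comap_mono hK.le) ?_
          intro heq
          have := congrArg (Subgroup.map phi) heq
          rw [Subgroup.map_comap_eq_self_of_surjective hsurj,
            Subgroup.map_comap_eq_self_of_surjective hsurj] at this
          exact hK.ne this
        have h3 := hM.2 _ hlt
        have h2 := congrArg (Subgroup.map phi) h3
        rw [Subgroup.map_comap_eq_self_of_surjective hsurj] at h2
        rw [h2, ← MonoidHom.range_eq_map, MonoidHom.range_eq_top_of_surjective _ hsurj]
    have hle2 : frattini (G ⧸ frattini G) ≤ Subgroup.map phi M := frattini_le_coatom hcoat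
    calc Subgroup.comap phi (frattini (G ⧸ frattini G))
        ≤ Subgroup.comap phi (Subgroup.map phi M) := Subgroup.comap_mono hle2
      _ = M := hcomapmap
  have h2 : Subgroup.map phi (frattini G) = ⊥ := by
    rw [Subgroup.map_eq_bot_iff, hker]
  rw [eq_bot_iff]
  calc frattini (G ⧸ frattini G)
      = Subgroup.map phi (Subgroup.comap phi (frattini (G ⧸ frattini G))) :=
        (Subgroup.map_comap_eq_self_of_surjective hsurj _).symm
    _ ≤ Subgroup.map phi (frattini G) := Subgroup.map_mono h1
    _ = ⊥ := h2

end Statement6Aux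

/-- If `G` is a nontrivial finite group and `H/Φ(G) = Soc(G/Φ(G))`, then
`C_G(H) ≤ H`. -/
theorem statement_6 (G : Type) [Group G] [Finite G] [Nontrivial G]
    (H : Subgroup G) (hle : frattini G ≤ H)
    (hsoc : H.map (QuotientGroup.mk' (frattini G)) = socle (G ⧸ frattini G)) :
    Subgroup.centralizer (H : Set G) ≤ H := by
  set phi := QuotientGroup.mk' (frattini G) with hphidef
  have hker : phi.ker = frattini G := QuotientGroup.ker_mk' _
  intro c hc
  have hcent : phi c ∈ Subgroup.centralizer ((socle (G ⧸ frattini G) : Subgroup _) : Set _) := by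
    rw [Subgroup.mem_centralizer_iff]
    intro x hx
    rw [← hsoc] at hx
    obtain ⟨h, hh, rfl⟩ := hx
    have hch : h * c = c * h := Subgroup.mem_centralizer_iff.mp hc h hh
    show phi h * phi c = phi c * phi h
    rw [← map_mul, ← map_mul, hch]
  have hmem : phi c ∈ socle (G ⧸ frattini G) :=
    aux_key (G ⧸ frattini G) (aux_frattini_quotient G) hcent
  rw [← hsoc] at hmem
  obtain ⟨h, hh, heq⟩ := hmem
  have hker' : h⁻¹ * c ∈ frattini G := by
    rw [← hker, MonoidHom.mem_ker, map_mul, map_inv, heq]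
    group
  have hcc : c = h * (h⁻¹ * c) := by group
  rw [hcc]
  exact H.mul_mem hh (hle hker')
end

section
/- Let 𝔉 be a non-empty formation of finite groups and 𝔏 an isomorphism-closed class of finite simple groups, and let 𝔏⁺ denote the class of abelian groups in 𝔏. Then there exists an 𝔏-composition satellite f with 𝔉 = CF_𝔏(f) if and only if there exists an 𝔏⁺-composition satellite h with 𝔉 = CF_{𝔏⁺}(h). -/
set_option maxHeartbeats 1000000
set_option linter.unusedVariables false

/-!
Write `𝔉 = CF_{𝔏₁}(f)` and let `𝔏₂` be a second class whose members outside `𝔏₁` are all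
non-abelian (both `𝔏₁ = 𝔏, 𝔏₂ = 𝔏⁺` and `𝔏₁ = 𝔏⁺, 𝔏₂ = 𝔏` qualify). Then `𝔉 = CF_{𝔏₂}(g)` for
the satellite `g` equal to `f` on `𝔏₁` and to `𝔉` everywhere else, including `𝔏₂'`.
Every group of `𝔉` satisfies the conditions of `g` because `𝔉` is closed under quotients.
Conversely `CF_{𝔏₂}(g)` is closed under quotients and `𝔉` is a formation, so a minimal
counterexample `G` has a unique minimal normal subgroup `N`, and `G/N ∈ 𝔉`. The small centralizer
`c_G(N)` is trivial, and so is `C_G(N)` when `N` is non-abelian; hence either `G/C_G(N)` or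
`G/c_G(N)` is a copy of `G` lying in `𝔉`, or `N` is `f`-central, and then so is every chief
factor of `G`, i.e. `G ∈ 𝔉`.
-/

section CompositionFactors

variable {X Y : Type} [Group X] [Group Y]

theorem Subgroup.card_lt_of_ne_top [Finite X] {M : Subgroup X} (hM : M ≠ ⊤) :
    Nat.card M < Nat.card X :=
  (Subgroup.card_le_card_group M).lt_of_ne (mt (Subgroup.card_eq_iff_eq_top M).mp hM)

theorem card_quotient_lt_of_ne_bot [Finite X] {N : Subgroup X} [N.Normal]
    (hN : N ≠ ⊥) : Nat.card (X ⧸ N) < Nat.card X := by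
  rw [Subgroup.card_eq_card_quotient_mul_card_subgroup N]
  exact lt_mul_of_one_lt_right Nat.card_pos ((Subgroup.one_lt_card_iff_ne_bot N).mpr hN)

theorem mul_comm_of_surjective {f : X →* Y} (hf : Function.Surjective f)
    (hX : ∀ a b : X, a * b = b * a) (a b : Y) : a * b = b * a := by
  obtain ⟨x, rfl⟩ := hf a
  obtain ⟨y, rfl⟩ := hf b
  rw [← map_mul, hX, map_mul]

theorem Subgroup.Normal.subgroupOf_map (f : X →* Y) {A B : Subgroup X} (hAB : A ≤ B)
    (hn : (A.subgroupOf B).Normal) : ((A.map f).subgroupOf (B.map f)).Normal := by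
  rw [Subgroup.normal_subgroupOf_iff (Subgroup.map_mono hAB)]
  rintro _ _ ⟨a, ha, rfl⟩ ⟨b, hb, rfl⟩
  exact ⟨b * a * b⁻¹, (Subgroup.normal_subgroupOf_iff hAB).mp hn a b ha hb, by simp⟩

theorem nonempty_quotient_subgroupOf_map_mulEquiv (f : X →* Y) {A B : Subgroup X} (hAB : A ≤ B)
    (hker : f.ker ⊓ B ≤ A) [(A.subgroupOf B).Normal]
    [((A.map f).subgroupOf (B.map f)).Normal] :
    Nonempty ((B ⧸ A.subgroupOf B) ≃* (B.map f ⧸ (A.map f).subgroupOf (B.map f))) := by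
  let ψ : B →* B.map f ⧸ (A.map f).subgroupOf (B.map f) :=
    (QuotientGroup.mk' _).comp (f.subgroupMap B)
  have hψ : Function.Surjective ψ :=
    (QuotientGroup.mk'_surjective _).comp (f.subgroupMap_surjective B)
  have hker : ψ.ker = A.subgroupOf B := by
    ext b
    simp only [ψ, MonoidHom.mem_ker, MonoidHom.comp_apply, QuotientGroup.mk'_apply,
      QuotientGroup.eq_one_iff, Subgroup.mem_subgroupOf, MonoidHom.subgroupMap_apply_coe]
    refine ⟨fun ⟨a, ha, hab⟩ => ?_, fun hb => ⟨b, hb, rfl⟩⟩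
    have hba : (b : X) * a⁻¹ ∈ A :=
      hker ⟨by simp [hab], B.mul_mem b.2 (B.inv_mem (hAB ha))⟩
    simpa using A.mul_mem hba ha
  exact ⟨(QuotientGroup.quotientMulEquivOfEq hker).symm.trans
    (QuotientGroup.quotientKerEquivOfSurjective ψ hψ)⟩

def IsCompStep (A B : Subgroup X) : Prop :=
  A ≤ B ∧ ∃ _ : (A.subgroupOf B).Normal, IsSimpleGroup (B ⧸ A.subgroupOf B)

theorem IsCompStep.map {A B : Subgroup X} (h : IsCompStep A B) (f : X →* Y)
    (hker : f.ker ⊓ B ≤ A) : IsCompStep (A.map f) (B.map f) := by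
  obtain ⟨hAB, hn, hsimple⟩ := h
  have hn' := hn.subgroupOf_map f hAB
  obtain ⟨e⟩ := nonempty_quotient_subgroupOf_map_mulEquiv f hAB hker
  exact ⟨Subgroup.map_mono hAB, hn', e.symm.isSimpleGroup⟩

theorem IsCompSeries.map {n : ℕ} {c : Fin (n + 1) → Subgroup X} (h : IsCompSeries n c)
    (e : X ≃* Y) : IsCompSeries n fun i => (c i).map (e : X →* Y) := by
  obtain ⟨h0, hlast, hstep⟩ := h
  have hker : (e : X →* Y).ker = ⊥ := MonoidHom.ker_eq_bot _ e.injective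
  refine ⟨by simp [h0], ?_, fun i => IsCompStep.map (hstep i) _ (by simp [hker])⟩
  simp only [hlast]
  exact Subgroup.map_top_of_surjective _ e.surjective

theorem IsCompFactor.of_mulEquiv {S : Type} [Group S] (h : IsCompFactor S X) (e : X ≃* Y) :
    IsCompFactor S Y := by
  obtain ⟨n, c, hc, i, hn, ⟨eS⟩⟩ := h
  have hle := (hc.2.2 i).1
  have hker : (e : X →* Y).ker ⊓ c i.succ ≤ c i.castSucc := by
    simp [MonoidHom.ker_eq_bot (e : X →* Y) e.injective]
  have hn' := hn.subgroupOf_map (e : X →* Y) hle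
  obtain ⟨e'⟩ := nonempty_quotient_subgroupOf_map_mulEquiv (e : X →* Y) hle hker
  exact ⟨n, _, hc.map e, i, hn', ⟨e'.symm.trans eS⟩⟩

theorem isCompFactor_congr {S : Type} [Group S] (e : X ≃* Y) :
    IsCompFactor S X ↔ IsCompFactor S Y :=
  ⟨fun h => h.of_mulEquiv e, fun h => h.of_mulEquiv e.symm⟩

theorem isCompFactor_quotient_subgroupOf_map_iff (f : X →* Y) {A B : Subgroup X} (hAB : A ≤ B)
    (hker : f.ker ⊓ B ≤ A) [(A.subgroupOf B).Normal]
    [((A.map f).subgroupOf (B.map f)).Normal] {S : Type} [Group S] :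
    IsCompFactor S (B ⧸ A.subgroupOf B) ↔
      IsCompFactor S (B.map f ⧸ (A.map f).subgroupOf (B.map f)) :=
  isCompFactor_congr (nonempty_quotient_subgroupOf_map_mulEquiv f hAB hker).some

theorem isCompStep_top_iff {M : Subgroup X} [M.Normal] :
    IsCompStep M ⊤ ↔ IsSimpleGroup (X ⧸ M) := by
  let ψ : (⊤ : Subgroup X) →* X ⧸ M := (QuotientGroup.mk' M).comp Subgroup.topEquiv.toMonoidHom
  have hψ : Function.Surjective ψ :=
    (QuotientGroup.mk'_surjective M).comp Subgroup.topEquiv.surjective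
  have hker : ψ.ker = M.subgroupOf ⊤ := by
    ext x
    rw [MonoidHom.mem_ker, Subgroup.mem_subgroupOf]
    exact QuotientGroup.eq_one_iff _
  have e := (QuotientGroup.quotientMulEquivOfEq hker).symm.trans
    (QuotientGroup.quotientKerEquivOfSurjective ψ hψ)
  exact ⟨fun ⟨_, _, h⟩ => e.isSimpleGroup_congr.mp h,
    fun h => ⟨le_top, inferInstance, e.isSimpleGroup_congr.mpr h⟩⟩

theorem IsCompSeries.snoc {M : Subgroup X} (hM : IsCompStep M ⊤) {n : ℕ}
    {c : Fin (n + 1) → Subgroup M} (h : IsCompSeries n c) :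
    IsCompSeries (n + 1) (Fin.snoc (fun i => (c i).map M.subtype) ⊤) := by
  obtain ⟨h0, hlast, hstep⟩ := h
  refine ⟨?_, by rw [Fin.snoc_last], fun i => Fin.lastCases ?_ (fun j => ?_) i⟩
  · rw [show (0 : Fin (n + 2)) = Fin.castSucc 0 from rfl, Fin.snoc_castSucc, h0,
      Subgroup.map_bot]
  · rw [Fin.succ_last, Fin.snoc_last, Fin.snoc_castSucc, hlast, ← MonoidHom.range_eq_map,
      Subgroup.range_subtype]
    exact hM
  · rw [Fin.succ_castSucc, Fin.snoc_castSucc, Fin.snoc_castSucc]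
    exact IsCompStep.map (hstep j) _ (by simp)

theorem IsCompFactor.of_isCompStep_top {M : Subgroup X} (hM : IsCompStep M ⊤) {S : Type}
    [Group S] (h : IsCompFactor S M) : IsCompFactor S X := by
  obtain ⟨n, c, hc, i, hn, ⟨eS⟩⟩ := h
  refine ⟨n + 1, _, hc.snoc hM, i.castSucc, ?_⟩
  rw [Fin.succ_castSucc, Fin.snoc_castSucc, Fin.snoc_castSucc]
  have hle := (hc.2.2 i).1
  have hn' := hn.subgroupOf_map M.subtype hle
  obtain ⟨e⟩ := nonempty_quotient_subgroupOf_map_mulEquiv M.subtype hle (by simp)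
  exact ⟨hn', ⟨e.symm.trans eS⟩⟩

theorem exists_normal_le_isCompStep_top [Finite X] {P : Subgroup X} (hP : P.Normal)
    (hPtop : P ≠ ⊤) : ∃ M : Subgroup X, M.Normal ∧ P ≤ M ∧ M ≠ ⊤ ∧ IsCompStep M ⊤ := by
  obtain ⟨M, ⟨hMn, hPM, hMtop⟩, hmax⟩ := Set.Finite.exists_maximalFor id
    {Q : Subgroup X | Q.Normal ∧ P ≤ Q ∧ Q ≠ ⊤} (Set.toFinite _) ⟨P, hP, le_rfl, hPtop⟩
  refine ⟨M, hMn, hPM, hMtop, isCompStep_top_iff.mpr ?_⟩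
  have : Nontrivial (X ⧸ M) := not_subsingleton_iff_nontrivial.mp
    (mt (QuotientGroup.subgroup_eq_top_of_subsingleton M) hMtop)
  refine ⟨fun Q hQ => ?_⟩
  have hMQ : M ≤ Q.comap (QuotientGroup.mk' M) := QuotientGroup.le_comap_mk' M Q
  by_cases htop : Q.comap (QuotientGroup.mk' M) = ⊤
  · right
    rw [← Subgroup.comap_top (QuotientGroup.mk' M)] at htop
    exact Subgroup.comap_injective (QuotientGroup.mk'_surjective M) htop
  · left
    have hQM := hmax ⟨hQ.comap _, hPM.trans hMQ, htop⟩ hMQ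
    rw [← Subgroup.map_comap_eq_self_of_surjective (QuotientGroup.mk'_surjective M) Q,
      Subgroup.map_eq_bot_iff, QuotientGroup.ker_mk']
    exact hQM

theorem exists_isCompSeries (X : Type) [Group X] [Finite X] :
    ∃ (n : ℕ) (c : Fin (n + 1) → Subgroup X), IsCompSeries n c := by
  induction h : Nat.card X using Nat.strong_induction_on generalizing X with
  | _ k ih =>
  by_cases htriv : (⊥ : Subgroup X) = ⊤
  · exact ⟨0, fun _ => ⊥, rfl, htriv, fun i => i.elim0⟩
  obtain ⟨M, -, -, hMtop, hM⟩ := exists_normal_le_isCompStep_top Subgroup.normal_bot htriv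
  obtain ⟨n, c, hc⟩ := ih _ (h ▸ Subgroup.card_lt_of_ne_top hMtop) M rfl
  exact ⟨n + 1, _, hc.snoc hM⟩

theorem exists_isCompFactor (X : Type) [Group X] [Finite X] [Nontrivial X] :
    ∃ (S : Type) (_ : Group S), IsCompFactor S X := by
  obtain ⟨n, c, hc⟩ := exists_isCompSeries X
  cases n with
  | zero => exact absurd (hc.1.symm.trans hc.2.1) bot_ne_top
  | succ m =>
    obtain ⟨-, hn, -⟩ := hc.2.2 0
    exact ⟨_, inferInstance, m + 1, c, hc, 0, hn, ⟨MulEquiv.refl _⟩⟩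

theorem IsCompFactor.of_normal [Finite X] {P : Subgroup X} (hP : P.Normal) {S : Type} [Group S]
    (h : IsCompFactor S P) : IsCompFactor S X := by
  induction hX : Nat.card X using Nat.strong_induction_on generalizing X with
  | _ k ih =>
  by_cases hPtop : P = ⊤
  · exact h.of_mulEquiv ((MulEquiv.subgroupCongr hPtop).trans Subgroup.topEquiv)
  obtain ⟨M, hMn, hPM, hMtop, hM⟩ := exists_normal_le_isCompStep_top hP hPtop
  exact (ih _ (hX ▸ Subgroup.card_lt_of_ne_top hMtop) Subgroup.normal_subgroupOf
    (h.of_mulEquiv (Subgroup.subgroupOfEquivOfLe hPM).symm) rfl).of_isCompStep_top hM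

theorem IsCompFactor.mul_comm (hX : ∀ a b : X, a * b = b * a) {S : Type} [Group S]
    (h : IsCompFactor S X) (a b : S) : a * b = b * a := by
  obtain ⟨n, c, -, i, hn, ⟨e⟩⟩ := h
  exact mul_comm_of_surjective (f := e.toMonoidHom.comp (QuotientGroup.mk' _))
    (e.surjective.comp (QuotientGroup.mk'_surjective _)) (fun x y => Subtype.ext (hX x y)) a b

theorem not_isCompFactor_of_subsingleton [Subsingleton X] {S : Type} [Group S] :
    ¬ IsCompFactor S X := by
  rintro ⟨n, c, hc, i, -⟩
  obtain ⟨-, hn, hsimple⟩ := hc.2.2 i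
  exact false_of_nontrivial_of_subsingleton (c i.succ ⧸ (c i.castSucc).subgroupOf (c i.succ))

theorem IsCompFactor.isSimpleGroup {S : Type} [Group S] (h : IsCompFactor S X) :
    IsSimpleGroup S := by
  obtain ⟨n, c, hc, i, hn, ⟨e⟩⟩ := h
  obtain ⟨-, _, hsimple⟩ := hc.2.2 i
  exact e.symm.isSimpleGroup_congr.mpr hsimple

theorem isCompFactor_quotient_bot_iff (A : Subgroup X) {S : Type} [Group S] :
    IsCompFactor S (A ⧸ (⊥ : Subgroup X).subgroupOf A) ↔ IsCompFactor S A :=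
  isCompFactor_congr
    ((QuotientGroup.quotientMulEquivOfEq (Subgroup.bot_subgroupOf A)).trans
      QuotientGroup.quotientBot)

end CompositionFactors

section ChiefFactors

variable {G Q : Type} [Group G] [Group Q] {φ : G →* Q} {H K : Subgroup G}

theorem IsChiefFactor.map (hcf : IsChiefFactor G H K) (hφ : Function.Surjective φ)
    (hker : φ.ker ≤ K) : IsChiefFactor Q (H.map φ) (K.map φ) := by
  have hcomap : ∀ {A : Subgroup G}, K ≤ A → (A.map φ).comap φ = A := fun hA =>
    Subgroup.comap_map_eq_self (hker.trans hA)
  refine ⟨hcf.normalH.map φ hφ, hcf.normalK.map φ hφ, ?_, fun Nb hNb hKN hNH => ?_⟩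
  · refine (Subgroup.map_mono hcf.lt.le).lt_of_ne fun h => hcf.lt.ne ?_
    rw [← hcomap le_rfl, h, hcomap hcf.lt.le]
  · have hN := Subgroup.map_comap_eq_self_of_surjective hφ Nb
    have hKN' : K ≤ Nb.comap φ := (hcomap le_rfl).symm.le.trans (Subgroup.comap_mono hKN)
    have hNH' : Nb.comap φ ≤ H := (Subgroup.comap_mono hNH).trans (hcomap hcf.lt.le).le
    exact (hcf.no_middle _ (hNb.comap φ) hKN' hNH').imp (fun h => by rw [← hN, h])
      (fun h => by rw [← hN, h])

theorem IsChiefFactor.comap {H K : Subgroup Q} (hcf : IsChiefFactor Q H K)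
    (hφ : Function.Surjective φ) : IsChiefFactor G (H.comap φ) (K.comap φ) := by
  refine ⟨hcf.normalH.comap φ, hcf.normalK.comap φ,
    (Subgroup.comap_lt_comap_of_surjective hφ).mpr hcf.lt, fun N hN hKN hNH => ?_⟩
  have hN' : (N.map φ).comap φ = N :=
    Subgroup.comap_map_eq_self ((Subgroup.ker_le_comap φ K).trans hKN)
  have hKN' : K ≤ N.map φ :=
    (Subgroup.map_comap_eq_self_of_surjective hφ K).symm.le.trans (Subgroup.map_mono hKN)
  have hNH' : N.map φ ≤ H :=
    (Subgroup.map_mono hNH).trans (Subgroup.map_comap_eq_self_of_surjective hφ H).le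
  exact (hcf.no_middle _ (hN.map φ hφ) hKN' hNH').imp (fun h => by rw [← hN', h])
    (fun h => by rw [← hN', h])

theorem le_relCentralizer (hK : K.Normal) : K ≤ relCentralizer H K hK := by
  intro k hk h _
  rw [show k * h * k⁻¹ * h⁻¹ = k * (h * k⁻¹ * h⁻¹) by group]
  exact K.mul_mem hk (hK.conj_mem _ (K.inv_mem hk) h)

theorem relCentralizer_map (hφ : Function.Surjective φ) (hker : φ.ker ≤ K) (hK : K.Normal) :
    relCentralizer (H.map φ) (K.map φ) (hK.map φ hφ) = (relCentralizer H K hK).map φ := by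
  ext y
  obtain ⟨x, rfl⟩ := hφ y
  simp only [mem_relCentralizer_iff, Subgroup.mem_map, forall_exists_index, and_imp,
    forall_apply_eq_imp_iff₂]
  constructor
  · intro hx
    refine ⟨x, fun h hh => ?_, rfl⟩
    rw [← Subgroup.comap_map_eq_self hker]
    simpa [map_mul, map_inv] using hx h hh
  · rintro ⟨x', hx', hxx'⟩ h hh
    exact ⟨_, hx' h hh, by simp [hxx']⟩

theorem subsingleton_quotient_subgroupOf_of_le {A : Subgroup G} (hAK : A ≤ K) :
    Subsingleton (A ⧸ K.subgroupOf A) := by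
  rw [Subgroup.subgroupOf_eq_top.mpr hAK]
  exact QuotientGroup.subsingleton_quotient_top

theorem le_smallCentralizer (hK : K.Normal) : K ≤ smallCentralizer H K hK := by
  refine le_sSup ⟨hK, fun S _ hS => absurd hS ?_⟩
  have := subsingleton_quotient_subgroupOf_of_le (sup_le (le_refl K) (le_refl K))
  exact not_isCompFactor_of_subsingleton

theorem avoidsFactors_map_iff (hker : φ.ker ≤ K) (hKH : K ≤ H) [K.Normal] [(K.map φ).Normal]
    (M : Subgroup G) :
    (∀ (S : Type) (_ : Group S), IsCompFactor S (↥(M ⊔ K) ⧸ K.subgroupOf (M ⊔ K)) →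
        ¬ IsCompFactor S (H ⧸ K.subgroupOf H)) ↔
      ∀ (S : Type) (_ : Group S),
        IsCompFactor S (↥(M.map φ ⊔ K.map φ) ⧸ (K.map φ).subgroupOf (M.map φ ⊔ K.map φ)) →
          ¬ IsCompFactor S (H.map φ ⧸ (K.map φ).subgroupOf (H.map φ)) := by
  rw [← Subgroup.map_sup]
  simp only [isCompFactor_quotient_subgroupOf_map_iff φ le_sup_right (inf_le_left.trans hker),
    isCompFactor_quotient_subgroupOf_map_iff φ hKH (inf_le_left.trans hker)]

theorem smallCentralizer_map (hφ : Function.Surjective φ) (hker : φ.ker ≤ K) (hKH : K ≤ H)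
    (hK : K.Normal) :
    smallCentralizer (H.map φ) (K.map φ) (hK.map φ hφ) = (smallCentralizer H K hK).map φ := by
  have := hK.map φ hφ
  apply le_antisymm
  · refine sSup_le fun Mb ⟨hMb, hMba⟩ => ?_
    have hMb' := Subgroup.map_comap_eq_self_of_surjective hφ Mb
    rw [← hMb'] at hMba ⊢
    exact Subgroup.map_mono
      (le_sSup ⟨hMb.comap φ, (avoidsFactors_map_iff hker hKH _).mpr hMba⟩)
  · rw [smallCentralizer, (Subgroup.gc_map_comap φ).l_sSup]
    exact iSup₂_le fun M ⟨hM, hMa⟩ =>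
      le_sSup ⟨hM.map φ hφ, (avoidsFactors_map_iff hker hKH M).mp hMa⟩

end ChiefFactors

section QuotientTransfer

open QuotientGroup

def IsIsoClosed (C : GroupClass) : Prop :=
  ∀ (A : Type) [Group A] [Finite A] (B : Type) [Group B] [Finite B], Nonempty (A ≃* B) → C A → C B

theorem IsIsoClosed.of_eq_empty_or_isFormation {C : GroupClass}
    (hC : C = EmptyClass ∨ IsFormation C) : IsIsoClosed C := by
  rcases hC with rfl | hC
  · exact fun _ _ _ _ _ _ _ h => h.elim
  · exact hC.iso_closed

theorem IsLCompSatellite.isIsoClosed_of_mem {L : GroupClass} {f : CompSatFun} {f' : GroupClass}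
    (hsat : IsLCompSatellite L f f') {S : Type} [Group S] [Finite S] (hS : L S) :
    IsIsoClosed (f S) :=
  .of_eq_empty_or_isFormation (hsat.2.1 S hS)

theorem IsLCompSatellite.isIsoClosed_compl {L : GroupClass} {f : CompSatFun} {f' : GroupClass}
    (hsat : IsLCompSatellite L f f') : IsIsoClosed f' :=
  .of_eq_empty_or_isFormation hsat.2.2

theorem IsIsoClosed.quotient_iff {C : GroupClass} (hC : IsIsoClosed C) {G : Type} [Group G]
    [Finite G] {N A : Subgroup G} [N.Normal] [A.Normal] {B : Subgroup (G ⧸ N)} [B.Normal]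
    (hNA : N ≤ A) (hAB : A.map (mk' N) = B) : C (G ⧸ A) ↔ C ((G ⧸ N) ⧸ B) := by
  subst hAB
  exact ⟨hC _ _ ⟨(quotientQuotientEquivQuotient N A hNA).symm⟩,
    hC _ _ ⟨quotientQuotientEquivQuotient N A hNA⟩⟩

theorem lCompFCentral_quotient_iff {L : GroupClass} {f : CompSatFun} {f' : GroupClass}
    (hsat : IsLCompSatellite L f f') {G : Type} [Group G] [Finite G] {N H K : Subgroup G}
    [N.Normal] (hcf : IsChiefFactor G H K) (hNK : N ≤ K) {Hb Kb : Subgroup (G ⧸ N)}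
    (hH : H.map (mk' N) = Hb) (hK : K.map (mk' N) = Kb) (hcfb : IsChiefFactor (G ⧸ N) Hb Kb) :
    LCompFCentral L f f' H K hcf ↔ LCompFCentral L f f' Hb Kb hcfb := by
  subst hH hK
  have := hcf.normalK
  have hker : (mk' N).ker ≤ K := by rw [ker_mk']; exact hNK
  have hfactor (S : Type) [Group S] := isCompFactor_quotient_subgroupOf_map_iff (S := S) (mk' N)
    hcf.lt.le (inf_le_left.trans hker)
  have := relCentralizer_normal hcf.normalH hcf.normalK
  have := relCentralizer_normal hcfb.normalH hcfb.normalK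
  have := smallCentralizer_normal (H := H) hcf.normalK
  have := smallCentralizer_normal (H := H.map (mk' N)) hcfb.normalK
  have hC {C : GroupClass} (hC : IsIsoClosed C) := hC.quotient_iff
    (hNK.trans (le_relCentralizer hcf.normalK))
    (relCentralizer_map (H := H) (mk'_surjective N) hker hcf.normalK).symm
  have hc {C : GroupClass} (hC : IsIsoClosed C) := hC.quotient_iff
    (hNK.trans (le_smallCentralizer hcf.normalK))
    (smallCentralizer_map (mk'_surjective N) hker hcf.lt.le hcf.normalK).symm
  refine or_congr ?_ (and_congr ?_ (hc hsat.isIsoClosed_compl))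
  · exact exists_congr fun S => exists_congr fun _ => exists_congr fun _ =>
      and_congr (hfactor S) (and_congr_right fun hS => hC (hsat.isIsoClosed_of_mem hS))
  · exact exists_congr fun S => exists_congr fun _ => exists_congr fun _ =>
      and_congr_left' (hfactor S)

theorem CFL.quotient {L : GroupClass} {f : CompSatFun} {f' : GroupClass}
    (hsat : IsLCompSatellite L f f') {G : Type} [Group G] [Finite G] (hG : CFL L f f' G)
    (N : Subgroup G) [N.Normal] : CFL L f f' (G ⧸ N) := fun Hb Kb hcfb =>
  have hcf := hcfb.comap (mk'_surjective N)
  (lCompFCentral_quotient_iff hsat hcf (by simpa using Subgroup.ker_le_comap (mk' N) Kb)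
    (Subgroup.map_comap_eq_self_of_surjective (mk'_surjective N) Hb)
    (Subgroup.map_comap_eq_self_of_surjective (mk'_surjective N) Kb) hcfb).mp (hG _ _ hcf)

end QuotientTransfer

section Monolith

variable {G : Type} [Group G]

theorem IsMinimalNormal.isChiefFactor {N : Subgroup G} (hN : IsMinimalNormal N) :
    IsChiefFactor G N ⊥ := by
  obtain ⟨hNn, hNbot, hmin⟩ := hN
  refine ⟨hNn, Subgroup.normal_bot, bot_lt_iff_ne_bot.mpr hNbot, fun M hM _ hMN => ?_⟩
  rcases hMN.lt_or_eq with hlt | heq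
  · exact Or.inl (hmin M hM hlt)
  · exact Or.inr heq

theorem exists_isMinimalNormal_le [Finite G] {W : Subgroup G} (hW : W.Normal) (hWbot : W ≠ ⊥) :
    ∃ N, IsMinimalNormal N ∧ N ≤ W := by
  obtain ⟨N, ⟨hNn, hNbot, hNW⟩, hmin⟩ := Set.Finite.exists_minimalFor id
    {Q : Subgroup G | Q.Normal ∧ Q ≠ ⊥ ∧ Q ≤ W} (Set.toFinite _) ⟨W, hW, hWbot, le_rfl⟩
  refine ⟨N, ⟨hNn, hNbot, fun M hM hMN => ?_⟩, hNW⟩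
  by_contra hMbot
  exact hMN.not_ge (hmin ⟨hM, hMbot, hMN.le.trans hNW⟩ hMN.le)

def IsMonolith (N : Subgroup G) : Prop :=
  IsMinimalNormal N ∧ ∀ W : Subgroup G, W.Normal → W ≠ ⊥ → N ≤ W

theorem IsMonolith.smallCentralizer_eq_bot [Finite G] {N : Subgroup G} (hN : IsMonolith N)
    (hbot : (⊥ : Subgroup G).Normal) : smallCentralizer N ⊥ hbot = ⊥ := by
  obtain ⟨⟨hNn, hNbot, -⟩, hle⟩ := hN
  refine le_bot_iff.mp (sSup_le fun M ⟨hM, hMa⟩ => le_bot_iff.mpr ?_)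
  by_contra hMbot
  have : Nontrivial N := Subgroup.nontrivial_iff_ne_bot N |>.mpr hNbot
  obtain ⟨S, _, hS⟩ := exists_isCompFactor N
  have hNM := hle M hM hMbot
  have hSM : IsCompFactor S M :=
    (hS.of_mulEquiv (Subgroup.subgroupOfEquivOfLe hNM).symm).of_normal Subgroup.normal_subgroupOf
  simp only [isCompFactor_quotient_bot_iff] at hMa
  exact hMa S _ (hSM.of_mulEquiv (MulEquiv.subgroupCongr (sup_bot_eq M).symm)) hS

theorem IsMonolith.relCentralizer_eq_bot {N : Subgroup G} (hN : IsMonolith N)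
    (hbot : (⊥ : Subgroup G).Normal) {S : Type} [Group S]
    (hS : IsCompFactor S (N ⧸ (⊥ : Subgroup G).subgroupOf N))
    (hSnc : ¬ ∀ a b : S, a * b = b * a) : relCentralizer N ⊥ hbot = ⊥ := by
  by_contra hC
  have hNC := hN.2 _ (relCentralizer_normal hN.1.1 hbot) hC
  refine hSnc (((isCompFactor_quotient_bot_iff N).mp hS).mul_comm fun a b => Subtype.ext ?_)
  have hab : (a : G) * b * (a : G)⁻¹ * (b : G)⁻¹ = 1 := hNC a.2 b b.2
  exact mul_inv_eq_iff_eq_mul.mp (mul_inv_eq_one.mp hab)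

open QuotientGroup in
theorem IsMonolith.cfl_of_quotient {L : GroupClass} {f : CompSatFun} {f' : GroupClass}
    (hsat : IsLCompSatellite L f f') [Finite G] {N : Subgroup G} [N.Normal] (hN : IsMonolith N)
    (hcent : LCompFCentral L f f' N ⊥ hN.1.isChiefFactor) (hq : CFL L f f' (G ⧸ N)) :
    CFL L f f' G := by
  intro H K hcf
  by_cases hK : K = ⊥
  · subst hK
    have hNH := hN.2 H hcf.normalH hcf.lt.ne'
    obtain rfl : N = H := (hcf.no_middle N hN.1.1 bot_le hNH).resolve_left hN.1.2.1
    exact hcent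
  · have hNK := hN.2 K hcf.normalK hK
    have hker : (mk' N).ker ≤ K := by rwa [ker_mk']
    exact (lCompFCentral_quotient_iff hsat hcf hNK rfl rfl
      (hcf.map (mk'_surjective N) hker)).mpr (hq _ _ _)

end Monolith

theorem IsFormation.of_quotient_eq_bot {F : GroupClass} (hF : IsFormation F) {G : Type}
    [Group G] [Finite G] {M : Subgroup G} [M.Normal] (hM : M = ⊥) (h : F (G ⧸ M)) : F G :=
  hF.iso_closed _ _ ⟨(QuotientGroup.quotientMulEquivOfEq hM).trans QuotientGroup.quotientBot⟩ h

theorem IsFormation.mem_of_isMonolith {F X : GroupClass} (hF : IsFormation F)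
    (hXq : ∀ (G : Type) [Group G] [Finite G] (N : Subgroup G) [N.Normal], X G → X (G ⧸ N))
    (htriv : ∀ (G : Type) [Group G] [Finite G], Subsingleton G → F G)
    (hmono : ∀ (G : Type) [Group G] [Finite G] (N : Subgroup G) [N.Normal],
      IsMonolith N → X G → F (G ⧸ N) → F G)
    (G : Type) [Group G] [Finite G] (hG : X G) : F G := by
  induction hcard : Nat.card G using Nat.strong_induction_on generalizing G with
  | _ k ih =>
  have hquot (N : Subgroup G) [N.Normal] (hN : N ≠ ⊥) : F (G ⧸ N) :=
    ih _ (hcard ▸ card_quotient_lt_of_ne_bot hN) _ (hXq G N hG) rfl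
  rcases subsingleton_or_nontrivial G with hG1 | hG1
  · exact htriv G hG1
  obtain ⟨N, hN, -⟩ := exists_isMinimalNormal_le Subgroup.normal_top (top_ne_bot (α := Subgroup G))
  have := hN.1
  by_cases hmon : ∀ W : Subgroup G, W.Normal → W ≠ ⊥ → N ≤ W
  · exact hmono G N ⟨hN, hmon⟩ hG (hquot N hN.2.1)
  push Not at hmon
  obtain ⟨W, hW, hWbot, hNW⟩ := hmon
  obtain ⟨N₂, hN₂, hN₂W⟩ := exists_isMinimalNormal_le hW hWbot
  have := hN₂.1
  have hdisj : N ⊓ N₂ = ⊥ := by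
    refine (inf_le_left.lt_or_eq).elim (hN.2.2 _ (inf_normal N N₂)) fun h => absurd ?_ hNW
    exact (h.symm.le.trans inf_le_right).trans hN₂W
  exact hF.subdirect_closed G N N₂ hdisj (hquot N hN.2.1) (hquot N₂ hN₂.2.1)

section ExtendSatellite

variable {L₁ L₂ : GroupClass} {f : CompSatFun} {f' F : GroupClass}

open Classical in
def extendSatellite (L₁ : GroupClass) (f : CompSatFun) (F : GroupClass) : CompSatFun :=
  fun S _ _ => if L₁ S then f S else F

theorem extendSatellite_of_mem {S : Type} [Group S] [Finite S] (hS : L₁ S) :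
    extendSatellite L₁ f F S = f S :=
  if_pos hS

theorem extendSatellite_of_not_mem {S : Type} [Group S] [Finite S] (hS : ¬ L₁ S) :
    extendSatellite L₁ f F S = F :=
  if_neg hS

theorem isLCompSatellite_extendSatellite (hL₁ : IsIsoClosed L₁)
    (hsat : IsLCompSatellite L₁ f f') (hF : IsFormation F) (L₂ : GroupClass) :
    IsLCompSatellite L₂ (extendSatellite L₁ f F) F := by
  refine ⟨fun S _ _ T _ _ _ _ hST => ?_, fun S _ _ _ => ?_, Or.inr hF⟩
  · by_cases hS : L₁ S
    · have hT := hL₁ S T hST hS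
      rw [extendSatellite_of_mem hS, extendSatellite_of_mem hT]
      exact hsat.1 S T hS hT hST
    · have hT : ¬ L₁ T := fun hT => hS (hL₁ T S (hST.map MulEquiv.symm) hT)
      rw [extendSatellite_of_not_mem hS, extendSatellite_of_not_mem hT]
  · by_cases hS : L₁ S
    · rw [extendSatellite_of_mem hS]
      exact hsat.2.1 S hS
    · rw [extendSatellite_of_not_mem hS]
      exact Or.inr hF

theorem LCompFCentral.extendSatellite (hF : IsFormation F) {G : Type} [Group G] [Finite G]
    (hG : F G) {H K : Subgroup G} {hcf : IsChiefFactor G H K}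
    (hcent : LCompFCentral L₁ f f' H K hcf) :
    LCompFCentral L₂ (extendSatellite L₁ f F) F H K hcf := by
  have := hcf.normalK
  have := relCentralizer_normal hcf.normalH hcf.normalK
  have := smallCentralizer_normal (H := H) hcf.normalK
  have hC : F (G ⧸ relCentralizer H K hcf.normalK) := hF.quotient_closed _ _ hG
  have hc : F (G ⧸ smallCentralizer H K hcf.normalK) := hF.quotient_closed _ _ hG
  obtain ⟨S, _, _, hS, hL₁S, hfS⟩ | ⟨⟨S, _, _, hS, -, hL₁S⟩, -⟩ := hcent
  · by_cases hL₂S : L₂ S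
    · exact Or.inl ⟨S, _, _, hS, hL₂S, by rwa [extendSatellite_of_mem hL₁S]⟩
    · exact Or.inr ⟨⟨S, _, _, hS, hS.isSimpleGroup, hL₂S⟩, hc⟩
  · by_cases hL₂S : L₂ S
    · exact Or.inl ⟨S, _, _, hS, hL₂S, by rwa [extendSatellite_of_not_mem hL₁S]⟩
    · exact Or.inr ⟨⟨S, _, _, hS, hS.isSimpleGroup, hL₂S⟩, hc⟩

theorem cfl_of_subsingleton {L : GroupClass} {f : CompSatFun} {f' : GroupClass} {G : Type}
    [Group G] [Finite G] [Subsingleton G] : CFL L f f' G :=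
  fun H K hcf => absurd hcf.lt (by simp [Subsingleton.elim H K])

theorem IsMonolith.mem_of_cfl_extendSatellite (hF : IsFormation F)
    (hFf : ∀ (G : Type) [Group G] [Finite G], F G ↔ CFL L₁ f f' G)
    (hsat : IsLCompSatellite L₁ f f')
    (hL₂₁ : ∀ (S : Type) [Group S] [Finite S], L₂ S → ¬ L₁ S → ¬ ∀ a b : S, a * b = b * a)
    {G : Type} [Group G] [Finite G] {N : Subgroup G} [N.Normal] (hN : IsMonolith N)
    (hG : CFL L₂ (extendSatellite L₁ f F) F G) (hq : F (G ⧸ N)) : F G := by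
  have := relCentralizer_normal hN.1.1 Subgroup.normal_bot
  have := smallCentralizer_normal (H := N) Subgroup.normal_bot
  obtain ⟨S, _, _, hS, hL₂S, hgS⟩ | ⟨-, hc⟩ := hG N ⊥ hN.1.isChiefFactor
  · by_cases hL₁S : L₁ S
    · rw [extendSatellite_of_mem hL₁S] at hgS
      exact (hFf G).mpr
        (hN.cfl_of_quotient hsat (Or.inl ⟨S, _, _, hS, hL₁S, hgS⟩) ((hFf _).mp hq))
    · rw [extendSatellite_of_not_mem hL₁S] at hgS
      exact hF.of_quotient_eq_bot (hN.relCentralizer_eq_bot _ hS (hL₂₁ S hL₂S hL₁S)) hgS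
  · exact hF.of_quotient_eq_bot (hN.smallCentralizer_eq_bot _) hc

theorem formation_eq_cfl_extendSatellite (hF : IsFormation F) (hL₁ : IsIsoClosed L₁)
    (hsat : IsLCompSatellite L₁ f f')
    (hFf : ∀ (G : Type) [Group G] [Finite G], F G ↔ CFL L₁ f f' G)
    (hL₂₁ : ∀ (S : Type) [Group S] [Finite S], L₂ S → ¬ L₁ S → ¬ ∀ a b : S, a * b = b * a)
    (G : Type) [Group G] [Finite G] : F G ↔ CFL L₂ (extendSatellite L₁ f F) F G := by
  have hsat₂ := isLCompSatellite_extendSatellite hL₁ hsat hF L₂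
  refine ⟨fun hG H K hcf => ((hFf G).mp hG H K hcf).extendSatellite hF hG, ?_⟩
  exact hF.mem_of_isMonolith (fun _ _ _ N _ hX => hX.quotient hsat₂ N)
    (fun G _ _ _ => (hFf G).mpr cfl_of_subsingleton)
    (fun _ _ _ _ _ hN hX hq => hN.mem_of_cfl_extendSatellite hF hFf hsat hL₂₁ hX hq) G

end ExtendSatellite

theorem IsIsoClosed.abelianIn {L : GroupClass} (hL : IsIsoClosed L) :
    IsIsoClosed (abelianIn L) := fun A _ _ B _ _ ⟨e⟩ ⟨hA, hcomm⟩ =>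
  ⟨hL A B ⟨e⟩ hA, mul_comm_of_surjective (f := e.toMonoidHom) e.surjective hcomm⟩

theorem statement_15_general (F : GroupClass) (hF : IsFormation F)
    (L : GroupClass) (hL : IsSimpleClass L) :
    (∃ (f : CompSatFun) (f' : GroupClass), IsLCompSatellite L f f' ∧
      ∀ (G : Type) [Group G] [Finite G], (F G ↔ CFL L f f' G)) ↔
    (∃ (h : CompSatFun) (h' : GroupClass), IsLCompSatellite (abelianIn L) h h' ∧
      ∀ (G : Type) [Group G] [Finite G], (F G ↔ CFL (abelianIn L) h h' G)) := by
  constructor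
  · rintro ⟨f, f', hsat, hFf⟩
    exact ⟨extendSatellite L f F, F, isLCompSatellite_extendSatellite hL.2 hsat hF _,
      formation_eq_cfl_extendSatellite hF hL.2 hsat hFf fun S _ _ hS hLS => absurd hS.1 hLS⟩
  · rintro ⟨h, h', hsat, hFf⟩
    have hL' : IsIsoClosed (abelianIn L) := IsIsoClosed.abelianIn hL.2
    exact ⟨extendSatellite (abelianIn L) h F, F, isLCompSatellite_extendSatellite hL' hsat hF _,
      formation_eq_cfl_extendSatellite hF hL' hsat hFf fun S _ _ hS hLS hcomm => hLS ⟨hS, hcomm⟩⟩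

/-- a non-empty formation has an `𝔏`-composition satellite iff it has an
`𝔏⁺`-composition satellite. -/
theorem statement_15 (F : GroupClass) (hF : IsFormation F) (hne : ∃ X : FinGrp, F X.carrier)
    (L : GroupClass) (hL : IsSimpleClass L) :
    (∃ (f : CompSatFun) (f' : GroupClass), IsLCompSatellite L f f' ∧
      ∀ (G : Type) [Group G] [Finite G], (F G ↔ CFL L f f' G)) ↔
    (∃ (h : CompSatFun) (h' : GroupClass), IsLCompSatellite (abelianIn L) h h' ∧
      ∀ (G : Type) [Group G] [Finite G], (F G ↔ CFL (abelianIn L) h h' G)) :=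
  statement_15_general F hF L hL
end
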